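/- arXiv:2307.04628 — 4 statements merged into one kernel-verified Lean document; each statement's English description precedes it below -/
import Mathlib

section
/- For every finite simple graph G and every k ≥ 1: if G admits a fuse-k-expression (i.e., some fuse-k-expression evaluates to a k-labeled graph whose underlying simple graph is isomorphic to G), then G admits a multi-(k+1)-expression. Consequently mcw(G) ≤ fw(G) + 1, where fw(G) is the least k such that G admits a fuse-k-expression and mcw(G) is the least k such that G admits a multi-k-expression. -/
/-! ### `k`-labeled graphs and the basic operations on them -/

/-- A `k`-labeled graph: a simple graph together with a labeling of its vertices
by labels from `Fin k`. -/
structure LGraph (k : ℕ) where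
  V : Type
  G : SimpleGraph V
  lab : V → Fin k

namespace LGraph

variable {k : ℕ}

/-- The join operation `η_{a,b}`: add all edges between vertices of label `a`
and vertices of label `b`. -/
def join (a b : Fin k) (H : LGraph k) : LGraph k where
  V := H.V
  G :=
    { Adj := fun u v =>
        H.G.Adj u v ∨ (u ≠ v ∧ ((H.lab u = a ∧ H.lab v = b) ∨ (H.lab u = b ∧ H.lab v = a)))
      symm := by
        constructor
        intro u v h
        rcases h with h | ⟨hne, h⟩
        · exact Or.inl (H.G.adj_symm h)
        · refine Or.inr ⟨hne.symm, ?_⟩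
          rcases h with ⟨h1, h2⟩ | ⟨h1, h2⟩
          · exact Or.inr ⟨h2, h1⟩
          · exact Or.inl ⟨h2, h1⟩
      loopless := by
        constructor
        intro v h
        rcases h with h | ⟨hne, _⟩
        · exact H.G.irrefl h
        · exact hne rfl }
  lab := H.lab

/-- The relabel operation `ρ_{a→b}`: every vertex of label `a` gets label `b` instead. -/
def relabel (a b : Fin k) (H : LGraph k) : LGraph k where
  V := H.V
  G := H.G
  lab := fun v => if H.lab v = a then b else H.lab v

/-- The fuse operation `θ_i`: replace all vertices of label `i` by a single new vertex
(represented by `none`) of label `i` whose neighbourhood is the union of their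
neighbourhoods. -/
def fuse (i : Fin k) (H : LGraph k) : LGraph k where
  V := Option {v : H.V // H.lab v ≠ i}
  G :=
    { Adj := fun x y =>
        match x, y with
        | some u, some v => H.G.Adj u.1 v.1
        | some u, none => ∃ w, H.lab w = i ∧ H.G.Adj u.1 w
        | none, some v => ∃ w, H.lab w = i ∧ H.G.Adj w v.1
        | none, none => False
      symm := by
        constructor
        rintro (_ | u) (_ | v) h
        · exact h
        · obtain ⟨w, hw, ha⟩ := h
          exact ⟨w, hw, ha.symm⟩
        · obtain ⟨w, hw, ha⟩ := h
          exact ⟨w, hw, ha.symm⟩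
        · exact H.G.adj_symm h
      loopless := by
        constructor
        rintro (_ | v) h
        · exact h
        · exact H.G.irrefl h }
  lab := fun x =>
    match x with
    | some u => H.lab u.1
    | none => i

/-- Disjoint union `H1 ⊕ H2` of two `k`-labeled graphs. -/
def union (H1 H2 : LGraph k) : LGraph k where
  V := H1.V ⊕ H2.V
  G := H1.G ⊕g H2.G
  lab := Sum.elim H1.lab H2.lab

/-- Label-preserving isomorphism of `k`-labeled graphs. -/
def LIso (H1 H2 : LGraph k) : Prop :=
  ∃ e : H1.G ≃g H2.G, ∀ v, H2.lab (e v) = H1.lab v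

/-- The occurrence of the join operator `η_{a,b}` applied to `H` is not useless,
i.e. it creates at least one new edge. -/
def joinUseful (a b : Fin k) (H : LGraph k) : Prop :=
  ∃ u v : H.V, u ≠ v ∧ H.lab u = a ∧ H.lab v = b ∧ ¬ H.G.Adj u v

/-- The occurrence of the fuse operator `θ_i` applied to `H` is not useless,
i.e. `H` has at least two vertices of label `i`. -/
def fuseUseful (i : Fin k) (H : LGraph k) : Prop :=
  ∃ u v : H.V, u ≠ v ∧ H.lab u = i ∧ H.lab v = i

/-- The occurrence of a relabel operator `ρ_{a→b}` applied to `H` is not useless,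
i.e. `H` has a vertex of label `a`. -/
def relabelUseful (a : Fin k) (H : LGraph k) : Prop :=
  ∃ v : H.V, H.lab v = a

/-- `relabelSeq i [a₁, …, a_q] H = ρ_{a₁→i}(⋯(ρ_{a_q→i}(H))⋯)`. -/
def relabelSeq (i : Fin k) : List (Fin k) → LGraph k → LGraph k
  | [], H => H
  | a :: as, H => relabel a i (relabelSeq i as H)

/-- None of the relabel operators in `relabelSeq i as H` is useless (this includes
that none of them has the form `ρ_{a→a}`). -/
def relabelSeqUseful (i : Fin k) : List (Fin k) → LGraph k → Prop
  | [], _ => True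
  | a :: as, H => relabelSeqUseful i as H ∧ a ≠ i ∧ relabelUseful a (relabelSeq i as H)

end LGraph

/-! ### Fuse-`k`-expressions -/

/-- A fuse-`k`-expression: introduce a vertex, disjoint union, join, relabel, fuse. -/
inductive FuseExpr (k : ℕ) where
  | intro (i : Fin k)
  | union (φ1 φ2 : FuseExpr k)
  | join (i j : Fin k) (φ : FuseExpr k)
  | relabel (i j : Fin k) (φ : FuseExpr k)
  | fuse (i : Fin k) (φ : FuseExpr k)

namespace FuseExpr

variable {k : ℕ}

/-- The single-vertex `k`-labeled graph with label `i`. -/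
def singleVertex (i : Fin k) : LGraph k := ⟨PUnit, ⊥, fun _ => i⟩

/-- The `k`-labeled graph `G^φ` obtained by evaluating a fuse-`k`-expression. -/
def eval : FuseExpr k → LGraph k
  | .intro i => singleVertex i
  | .union φ1 φ2 => LGraph.union φ1.eval φ2.eval
  | .join i j φ => LGraph.join i j φ.eval
  | .relabel i j φ => LGraph.relabel i j φ.eval
  | .fuse i φ => LGraph.fuse i φ.eval

/-- Well-formedness of a fuse-`k`-expression: joins and relabels use two distinct labels,
and every fuse `θ_i` is applied to a graph having a vertex of label `i`. -/
def WF : FuseExpr k → Prop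
  | .intro _ => True
  | .union φ1 φ2 => φ1.WF ∧ φ2.WF
  | .join i j φ => i ≠ j ∧ φ.WF
  | .relabel i j φ => i ≠ j ∧ φ.WF
  | .fuse i φ => φ.WF ∧ ∃ v, φ.eval.lab v = i

end FuseExpr

/-- A graph `G` admits a fuse-`k`-expression if some well-formed fuse-`k`-expression
evaluates to a labeled graph whose underlying simple graph is isomorphic to `G`. -/
def FuseAdmits {V : Type} (k : ℕ) (G : SimpleGraph V) : Prop :=
  ∃ φ : FuseExpr k, φ.WF ∧ Nonempty (φ.eval.G ≃g G)

/-! ### Multi-`k`-labeled graphs and multi-`k`-expressions -/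

/-- A multi-`k`-labeled graph: every vertex carries a set of labels from `Fin k`. -/
structure MGraph (k : ℕ) where
  V : Type
  G : SimpleGraph V
  lab : V → Set (Fin k)

namespace MGraph

variable {k : ℕ}

/-- Multi-join `η_{i,j}`: add all edges between vertices whose label set contains `i`
and vertices whose label set contains `j`. -/
def join (i j : Fin k) (H : MGraph k) : MGraph k where
  V := H.V
  G :=
    { Adj := fun u v =>
        H.G.Adj u v ∨ (u ≠ v ∧ ((i ∈ H.lab u ∧ j ∈ H.lab v) ∨ (j ∈ H.lab u ∧ i ∈ H.lab v)))
      symm := by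
        constructor
        intro u v h
        rcases h with h | ⟨hne, h⟩
        · exact Or.inl (H.G.adj_symm h)
        · refine Or.inr ⟨hne.symm, ?_⟩
          rcases h with ⟨h1, h2⟩ | ⟨h1, h2⟩
          · exact Or.inr ⟨h2, h1⟩
          · exact Or.inl ⟨h2, h1⟩
      loopless := by
        constructor
        intro v h
        rcases h with h | ⟨hne, _⟩
        · exact H.G.irrefl h
        · exact hne rfl }
  lab := H.lab

/-- Multi-relabel `ρ_{i→S}`: in every label set containing `i`, replace `i` by the set `S`. -/
def relabel (i : Fin k) (S : Set (Fin k)) (H : MGraph k) : MGraph k where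
  V := H.V
  G := H.G
  lab := fun v => {j | (j ∈ H.lab v ∧ j ≠ i) ∨ (i ∈ H.lab v ∧ j ∈ S)}

/-- Disjoint union of multi-`k`-labeled graphs. -/
def union (H1 H2 : MGraph k) : MGraph k where
  V := H1.V ⊕ H2.V
  G := H1.G ⊕g H2.G
  lab := Sum.elim H1.lab H2.lab

/-- The single-vertex multi-`k`-labeled graph with label set `S`. -/
def singleVertex (S : Set (Fin k)) : MGraph k := ⟨PUnit, ⊥, fun _ => S⟩

end MGraph

/-- A multi-`k`-expression. -/
inductive MultiExpr (k : ℕ) where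
  | intro (S : Set (Fin k))
  | union (φ1 φ2 : MultiExpr k)
  | join (i j : Fin k) (φ : MultiExpr k)
  | relabel (i : Fin k) (S : Set (Fin k)) (φ : MultiExpr k)

namespace MultiExpr

variable {k : ℕ}

/-- The multi-`k`-labeled graph obtained by evaluating a multi-`k`-expression. -/
def eval : MultiExpr k → MGraph k
  | .intro S => MGraph.singleVertex S
  | .union φ1 φ2 => MGraph.union φ1.eval φ2.eval
  | .join i j φ => MGraph.join i j φ.eval
  | .relabel i S φ => MGraph.relabel i S φ.eval

/-- Well-formedness of a multi-`k`-expression: every join `η_{i,j}` has `i ≠ j` and is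
applied to a graph in which no vertex's label set contains both `i` and `j`. -/
def WF : MultiExpr k → Prop
  | .intro _ => True
  | .union φ1 φ2 => φ1.WF ∧ φ2.WF
  | .join i j φ => i ≠ j ∧ (∀ v, ¬ (i ∈ φ.eval.lab v ∧ j ∈ φ.eval.lab v)) ∧ φ.WF
  | .relabel _ _ φ => φ.WF

end MultiExpr

/-- A graph `G` admits a multi-`k`-expression if some well-formed multi-`k`-expression
evaluates to a multi-labeled graph whose underlying simple graph is isomorphic to `G`. -/
def MultiAdmits {V : Type} (k : ℕ) (G : SimpleGraph V) : Prop :=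
  ∃ φ : MultiExpr k, φ.WF ∧ Nonempty (φ.eval.G ≃g G)

/-- The fusion-width of `G`: the least `k` such that `G` admits a fuse-`k`-expression. -/
noncomputable def fw {V : Type} [Fintype V] (G : SimpleGraph V) : ℕ :=
  sInf {k | FuseAdmits k G}

/-- The multi-clique-width of `G`: the least `k` such that `G` admits a
multi-`k`-expression. -/
noncomputable def mcw {V : Type} [Fintype V] (G : SimpleGraph V) : ℕ :=
  sInf {k | MultiAdmits k G}


/-!
Evaluate a fuse-`k`-expression bottom-up while building only some of its vertices: for a set
`R` of labels, the vertices whose label lies outside `R` are those that a later `θ` will fuse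
away, and they are not built at all. Instead every built vertex carries, besides its own label,
each label `c ∉ R` of a neighbour: this multi-labeled graph is `LGraph.shadow R H`. Shadows are
produced by multi-expressions that never use the spare label `k`. A relabel `ρ_{a→b}` pulls `R`
back along the relabelling; a join `η_{i,j}` with `j ∉ R` only marks the `i`-vertices with `j`;
and a fuse `θ_i` with `i ∈ R` (so `i ∉ R` below it) adds the fused vertex with the spare label,
joins it to every vertex marked `i`, erases the marks `i`, and then gives the new vertex its label
set. At the root `R` is everything, and the shadow is the graph itself.
-/

namespace MGraph

variable {k : ℕ}

def LIso (M N : MGraph k) : Prop :=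
  ∃ e : M.G ≃g N.G, ∀ v, N.lab (e v) = M.lab v

theorem LIso.trans {M N P : MGraph k} : M.LIso N → N.LIso P → M.LIso P := by
  rintro ⟨e, he⟩ ⟨f, hf⟩
  exact ⟨e.trans f, fun v => (hf (e v)).trans (he v)⟩

theorem LIso.union {M₁ M₂ N₁ N₂ : MGraph k} :
    M₁.LIso N₁ → M₂.LIso N₂ → (M₁.union M₂).LIso (N₁.union N₂) := by
  rintro ⟨e₁, he₁⟩ ⟨e₂, he₂⟩
  exact ⟨.sumCongr e₁ e₂, by rintro (v | v); exacts [he₁ v, he₂ v]⟩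

theorem LIso.join {M N : MGraph k} (i j : Fin k) :
    M.LIso N → (M.join i j).LIso (N.join i j) := by
  rintro ⟨e, he⟩
  refine ⟨⟨e.toEquiv, fun {u v : M.V} =>
    or_congr e.map_adj_iff (and_congr e.injective.ne_iff ?_)⟩, he⟩
  change (i ∈ N.lab (e u) ∧ j ∈ N.lab (e v) ∨ j ∈ N.lab (e u) ∧ i ∈ N.lab (e v)) ↔ _
  rw [he, he]

theorem LIso.relabel {M N : MGraph k} (i : Fin k) (S : Set (Fin k)) :
    M.LIso N → (M.relabel i S).LIso (N.relabel i S) := by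
  rintro ⟨e, he⟩
  exact ⟨e, fun (v : M.V) => congrArg (fun L => {j | j ∈ L ∧ j ≠ i ∨ i ∈ L ∧ j ∈ S}) (he v)⟩

theorem LIso.union_of_isEmpty_left {M₁ : MGraph k} (M₂ : MGraph k) [IsEmpty M₁.V] :
    M₂.LIso (M₁.union M₂) :=
  ⟨⟨(Equiv.emptySum M₁.V M₂.V).symm, Iff.rfl⟩, fun _ => rfl⟩

theorem LIso.union_of_isEmpty_right (M₁ : MGraph k) {M₂ : MGraph k} [IsEmpty M₂.V] :
    M₁.LIso (M₁.union M₂) :=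
  ⟨⟨(Equiv.sumEmpty M₁.V M₂.V).symm, Iff.rfl⟩, fun _ => rfl⟩

def Realizable (M : MGraph k) : Prop :=
  IsEmpty M.V ∨ ∃ ψ : MultiExpr k, ψ.WF ∧ ψ.eval.LIso M

theorem Realizable.of_lIso {M N : MGraph k} (hM : M.Realizable) (hMN : M.LIso N) :
    N.Realizable := by
  rcases hM with hM | ⟨ψ, hψ, hψM⟩
  · obtain ⟨e, -⟩ := hMN
    exact .inl e.toEquiv.symm.isEmpty
  · exact .inr ⟨ψ, hψ, hψM.trans hMN⟩

theorem realizable_singleVertex (S : Set (Fin k)) : (singleVertex S).Realizable :=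
  .inr ⟨.intro S, trivial, ⟨.refl, fun _ => rfl⟩⟩

theorem Realizable.union {M₁ M₂ : MGraph k} (h₁ : M₁.Realizable) (h₂ : M₂.Realizable) :
    (M₁.union M₂).Realizable := by
  rcases h₁ with h₁ | ⟨ψ₁, hψ₁, e₁⟩ <;> rcases h₂ with h₂ | ⟨ψ₂, hψ₂, e₂⟩
  · exact .inl (inferInstance : IsEmpty (M₁.V ⊕ M₂.V))
  · exact Realizable.of_lIso (.inr ⟨ψ₂, hψ₂, e₂⟩) (.union_of_isEmpty_left M₂)
  · exact .inr ⟨ψ₁, hψ₁, e₁.trans (.union_of_isEmpty_right M₁)⟩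
  · exact .inr ⟨.union ψ₁ ψ₂, ⟨hψ₁, hψ₂⟩, e₁.union e₂⟩

theorem Realizable.relabel {M : MGraph k} (h : M.Realizable) (i : Fin k) (S : Set (Fin k)) :
    (M.relabel i S).Realizable := by
  rcases h with h | ⟨ψ, hψ, e⟩
  · exact .inl h
  · exact .inr ⟨.relabel i S ψ, hψ, e.relabel i S⟩

theorem Realizable.join {M : MGraph k} (h : M.Realizable) {i j : Fin k} (hij : i ≠ j)
    (hM : ∀ v, ¬ (i ∈ M.lab v ∧ j ∈ M.lab v)) : (M.join i j).Realizable := by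
  rcases h with h | ⟨ψ, hψ, ⟨e, he⟩⟩
  · exact .inl h
  · refine .inr ⟨.join i j ψ, ⟨hij, fun v => ?_, hψ⟩, LIso.join i j ⟨e, he⟩⟩
    rw [← he v]
    exact hM (e v)

theorem relabel_singleton_lab (M : MGraph k) (a b : Fin k) (v : M.V) :
    (M.relabel a {b}).lab v = (fun j => if j = a then b else j) '' M.lab v := by
  ext j
  simp only [relabel, Set.mem_ofPred_eq, Set.mem_singleton_iff, Set.mem_image]
  constructor
  · rintro (⟨hj, hja⟩ | ⟨ha, rfl⟩)
    · exact ⟨j, hj, if_neg hja⟩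
    · exact ⟨a, ha, if_pos rfl⟩
  · rintro ⟨x, hx, rfl⟩
    by_cases hxa : x = a
    · subst hxa
      exact .inr ⟨hx, if_pos rfl⟩
    · rw [if_neg hxa]
      exact .inl ⟨hx, hxa⟩

theorem relabel_insert_self_lab (M : MGraph k) (a b : Fin k) (v : M.V) :
    (M.relabel a {a, b}).lab v = M.lab v ∪ {d | a ∈ M.lab v ∧ d = b} := by
  ext d
  simp only [relabel, Set.mem_ofPred_eq, Set.mem_union, Set.mem_insert_iff, Set.mem_singleton_iff]
  grind

/-- The counterpart of `θ_i` for multi-expressions, with a label `t` that occurs nowhere. -/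
def attachVertex (t i : Fin k) (S : Set (Fin k)) (M : MGraph k) : MGraph k :=
  (((M.union (singleVertex {t})).join t i).relabel i ∅).relabel t S

theorem Realizable.attachVertex {M : MGraph k} (h : M.Realizable) {t i : Fin k} (hti : t ≠ i)
    (ht : ∀ v, t ∉ M.lab v) (S : Set (Fin k)) : (M.attachVertex t i S).Realizable := by
  refine (((h.union (realizable_singleVertex {t})).join hti ?_).relabel i ∅).relabel t S
  rintro (v | v) ⟨htv, hiv⟩
  exacts [ht v htv, hti (Set.mem_singleton_iff.1 hiv).symm]

section attachVertex

variable {M : MGraph k} {t i : Fin k} {S : Set (Fin k)}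

theorem attachVertex_lab_inl (ht : ∀ v, t ∉ M.lab v) (v : M.V) :
    (M.attachVertex t i S).lab (.inl v) = M.lab v \ {i} := by
  ext d
  simp only [attachVertex, relabel, join, union, Sum.elim_inl, Set.mem_ofPred_eq,
    Set.mem_sdiff, Set.mem_singleton_iff, Set.mem_empty_iff_false, and_false, or_false]
  constructor
  · rintro (⟨h, -⟩ | ⟨⟨h, -⟩, -⟩)
    exacts [h, absurd h (ht v)]
  · exact fun h => .inl ⟨h, fun hdt => ht v (hdt ▸ h.1)⟩

theorem attachVertex_lab_inr (hti : t ≠ i) (u : PUnit) :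
    (M.attachVertex t i S).lab (.inr u) = S := by
  ext d
  simp [attachVertex, relabel, join, union, singleVertex, hti]
  tauto

theorem attachVertex_adj_inl_inl (ht : ∀ v, t ∉ M.lab v) (u v : M.V) :
    (M.attachVertex t i S).G.Adj (.inl u) (.inl v) ↔ M.G.Adj u v := by
  simp [attachVertex, relabel, join, union, ht]

theorem attachVertex_adj_inl_inr (ht : ∀ v, t ∉ M.lab v) (v : M.V) (u : PUnit) :
    (M.attachVertex t i S).G.Adj (.inl v) (.inr u) ↔ i ∈ M.lab v := by
  simp [attachVertex, relabel, join, union, ht, singleVertex]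

end attachVertex

end MGraph

namespace LGraph

variable {k : ℕ}

def shadowLabels (R : Set (Fin k)) (H : LGraph k) (v : H.V) : Set (Fin k) :=
  {c | (c ∈ R ∧ H.lab v = c) ∨ (c ∉ R ∧ ∃ w, H.lab w = c ∧ H.G.Adj v w)}

def shadow (R : Set (Fin k)) (H : LGraph k) : MGraph (k + 1) where
  V := H.lab ⁻¹' R
  G := H.G.induce (H.lab ⁻¹' R)
  lab v := Fin.castSucc '' H.shadowLabels R v

variable {R : Set (Fin k)} {H : LGraph k} {i j : Fin k}

theorem castSucc_mem_shadow_lab {v : (H.shadow R).V} {c : Fin k} :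
    c.castSucc ∈ (H.shadow R).lab v ↔ c ∈ H.shadowLabels R v.1 :=
  (Fin.castSucc_injective k).mem_set_image

theorem last_not_mem_shadow_lab (v : (H.shadow R).V) : Fin.last k ∉ (H.shadow R).lab v := by
  rintro ⟨c, -, hc⟩
  exact Fin.castSucc_ne_last c hc

theorem mem_shadowLabels_of_mem {v : H.V} {c : Fin k} (hc : c ∈ R) :
    c ∈ H.shadowLabels R v ↔ H.lab v = c := by
  simp [shadowLabels, hc]

theorem mem_shadowLabels_of_not_mem {v : H.V} {c : Fin k} (hc : c ∉ R) :
    c ∈ H.shadowLabels R v ↔ ∃ w, H.lab w = c ∧ H.G.Adj v w := by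
  simp [shadowLabels, hc]

theorem castSucc_mem_shadow_lab_of_mem {v : (H.shadow R).V} {c : Fin k} (hc : c ∈ R) :
    c.castSucc ∈ (H.shadow R).lab v ↔ H.lab v.1 = c :=
  castSucc_mem_shadow_lab.trans (mem_shadowLabels_of_mem hc)

theorem realizable_shadow_singleVertex (R : Set (Fin k)) (i : Fin k) :
    ((FuseExpr.singleVertex i).shadow R).Realizable := by
  by_cases hi : i ∈ R
  · refine (MGraph.realizable_singleVertex {i.castSucc}).of_lIso
      ⟨⟨⟨fun _ => ⟨(), hi⟩, fun _ => (), fun _ => rfl, fun _ => rfl⟩, Iff.rfl⟩, fun _ => ?_⟩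
    change Fin.castSucc '' _ = _
    rw [← Set.image_singleton]
    congr 1
    ext c
    simp only [shadowLabels, FuseExpr.singleVertex, SimpleGraph.bot_adj, and_false,
      exists_const, or_false, Set.mem_ofPred_eq, Set.mem_singleton_iff]
    exact ⟨fun h => h.2.symm, fun h => ⟨h ▸ hi, h.symm⟩⟩
  · exact .inl ⟨fun v => hi v.2⟩

theorem shadowLabels_union_inl (H₁ H₂ : LGraph k) (v : H₁.V) :
    (H₁.union H₂).shadowLabels R (.inl v) = H₁.shadowLabels R v := by
  ext c
  simp [shadowLabels, LGraph.union]

theorem shadowLabels_union_inr (H₁ H₂ : LGraph k) (v : H₂.V) :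
    (H₁.union H₂).shadowLabels R (.inr v) = H₂.shadowLabels R v := by
  ext c
  simp [shadowLabels, LGraph.union]

theorem lIso_shadow_union (R : Set (Fin k)) (H₁ H₂ : LGraph k) :
    ((H₁.shadow R).union (H₂.shadow R)).LIso ((H₁.union H₂).shadow R) := by
  refine ⟨⟨(Equiv.subtypeSum (p := (Sum.elim H₁.lab H₂.lab · ∈ R))).symm, ?_⟩, ?_⟩
  · rintro (u | u) (v | v) <;> exact Iff.rfl
  · rintro (⟨v, -⟩ | ⟨v, -⟩)
    · exact congrArg (Fin.castSucc '' ·) (shadowLabels_union_inl H₁ H₂ v)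
    · exact congrArg (Fin.castSucc '' ·) (shadowLabels_union_inr H₁ H₂ v)

theorem shadowLabels_relabel (R : Set (Fin k)) (H : LGraph k) (a b : Fin k) (v : H.V) :
    (H.relabel a b).shadowLabels R v = (fun c => if c = a then b else c) ''
      H.shadowLabels ((fun c => if c = a then b else c) ⁻¹' R) v := by
  set f : Fin k → Fin k := fun c => if c = a then b else c
  ext c
  change (c ∈ R ∧ f (H.lab v) = c ∨ c ∉ R ∧ ∃ w, f (H.lab w) = c ∧ H.G.Adj v w) ↔
    ∃ x, ((f x ∈ R ∧ H.lab v = x) ∨ (f x ∉ R ∧ ∃ w, H.lab w = x ∧ H.G.Adj v w)) ∧ f x = c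
  constructor
  · rintro (⟨hc, hv⟩ | ⟨hc, w, hw, hvw⟩)
    · exact ⟨H.lab v, .inl ⟨hv ▸ hc, rfl⟩, hv⟩
    · exact ⟨H.lab w, .inr ⟨hw ▸ hc, w, rfl, hvw⟩, hw⟩
  · rintro ⟨x, ⟨hx, rfl⟩ | ⟨hx, w, rfl, hvw⟩, rfl⟩
    · exact .inl ⟨hx, rfl⟩
    · exact .inr ⟨hx, w, rfl, hvw⟩

theorem lIso_shadow_relabel (R : Set (Fin k)) (H : LGraph k) (a b : Fin k) :
    ((H.shadow ((fun c => if c = a then b else c) ⁻¹' R)).relabel a.castSucc {b.castSucc}).LIso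
      ((H.relabel a b).shadow R) := by
  refine ⟨.refl, fun (v : H.lab ⁻¹' _) => ?_⟩
  have hcomm (c : Fin k) : (if c = a then b else c).castSucc =
      if c.castSucc = a.castSucc then b.castSucc else c.castSucc := by
    by_cases hc : c = a <;> simp [hc]
  exact (congrArg (Fin.castSucc '' ·) (shadowLabels_relabel R H a b v)).trans
    ((Set.image_comm hcomm).trans
      (MGraph.relabel_singleton_lab (H.shadow _) a.castSucc b.castSucc v).symm)

theorem shadowLabels_fuse_some (R : Set (Fin k)) (H : LGraph k) (i : Fin k)
    (u : {v : H.V // H.lab v ≠ i}) :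
    (H.fuse i).shadowLabels R (some u) = H.shadowLabels R u.1 := by
  ext c
  refine or_congr Iff.rfl (and_congr_right fun _ => ⟨?_, ?_⟩)
  · rintro ⟨_ | w, hw, hadj⟩
    · obtain ⟨w, hwi, hadj⟩ := hadj
      exact ⟨w, hwi.trans hw, hadj⟩
    · exact ⟨w.1, hw, hadj⟩
  · rintro ⟨w, hw, hadj⟩
    by_cases hwi : H.lab w = i
    · exact ⟨none, hwi.symm.trans hw, w, hwi, hadj⟩
    · exact ⟨some ⟨w, hwi⟩, hw, hadj⟩

theorem lIso_shadow_fuse_of_not_mem (R : Set (Fin k)) (H : LGraph k) (hi : i ∉ R) :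
    (H.shadow R).LIso ((H.fuse i).shadow R) := by
  let e : H.lab ⁻¹' R ≃ (H.fuse i).lab ⁻¹' R :=
    { toFun v := ⟨some ⟨v.1, fun h => hi (h ▸ v.2)⟩, v.2⟩
      invFun
        | ⟨some u, h⟩ => ⟨u.1, h⟩
        | ⟨none, h⟩ => absurd h hi
      left_inv _ := rfl
      right_inv := by rintro ⟨_ | u, h⟩; exacts [absurd h hi, rfl] }
  exact ⟨⟨e, Iff.rfl⟩, fun v => congrArg (Fin.castSucc '' ·) (shadowLabels_fuse_some R H i _)⟩

theorem shadowLabels_sdiff_singleton (H : LGraph k) (hi : i ∈ R) {v : H.V} (hv : H.lab v ≠ i) :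
    H.shadowLabels (R \ {i}) v \ {i} = H.shadowLabels R v := by
  ext c
  by_cases hc : c = i
  · subst hc
    simp [shadowLabels, hi, hv]
  · simp [shadowLabels, hc]

theorem lIso_shadow_fuse_of_mem (R : Set (Fin k)) (H : LGraph k) (hi : i ∈ R) :
    ((H.shadow (R \ {i})).attachVertex (Fin.last k) i.castSucc
      (Fin.castSucc '' (H.fuse i).shadowLabels R none)).LIso ((H.fuse i).shadow R) := by
  let e : H.lab ⁻¹' (R \ {i}) ⊕ PUnit ≃ (H.fuse i).lab ⁻¹' R :=
    { toFun
        | .inl v => ⟨some ⟨v.1, v.2.2⟩, v.2.1⟩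
        | .inr _ => ⟨none, hi⟩
      invFun
        | ⟨some u, h⟩ => .inl ⟨u.1, h, u.2⟩
        | ⟨none, _⟩ => .inr ()
      left_inv := by rintro (v | v) <;> rfl
      right_inv := by rintro ⟨_ | u, h⟩ <;> rfl }
  have hlast : ∀ v : (H.shadow (R \ {i})).V, Fin.last k ∉ (H.shadow (R \ {i})).lab v :=
    last_not_mem_shadow_lab
  refine ⟨⟨e, fun {x y} => ?_⟩, ?_⟩
  · have hnone (v : H.lab ⁻¹' (R \ {i})) (u : PUnit) :
        ((H.fuse i).shadow R).G.Adj (e (.inl v)) (e (.inr u)) ↔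
          ((H.shadow (R \ {i})).attachVertex (Fin.last k) i.castSucc
            (Fin.castSucc '' (H.fuse i).shadowLabels R none)).G.Adj (.inl v) (.inr u) :=
      ((MGraph.attachVertex_adj_inl_inr hlast v u).trans (castSucc_mem_shadow_lab.trans
        (mem_shadowLabels_of_not_mem fun h => h.2 rfl))).symm
    rcases x with x | x <;> rcases y with y | y
    · exact (MGraph.attachVertex_adj_inl_inl hlast x y).symm
    · exact hnone x y
    · exact (SimpleGraph.adj_comm _ _ _).trans ((hnone y x).trans (SimpleGraph.adj_comm _ _ _))
    · exact iff_of_false (SimpleGraph.irrefl _) (SimpleGraph.irrefl _)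
  · rintro (v | v)
    · refine (congrArg (Fin.castSucc '' ·) ((shadowLabels_fuse_some R H i _).trans
        (shadowLabels_sdiff_singleton H hi v.2.2).symm)).trans ?_
      rw [Set.image_sdiff (Fin.castSucc_injective k), Set.image_singleton]
      exact (MGraph.attachVertex_lab_inl hlast v).symm
    · exact (MGraph.attachVertex_lab_inr (Fin.castSucc_ne_last i).symm v).symm

theorem realizable_shadow_fuse (h : ∀ R, (H.shadow R).Realizable) (R : Set (Fin k)) (i : Fin k) :
    ((H.fuse i).shadow R).Realizable := by
  by_cases hi : i ∈ R
  · exact ((h (R \ {i})).attachVertex (Fin.castSucc_ne_last i).symm last_not_mem_shadow_lab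
      _).of_lIso (lIso_shadow_fuse_of_mem R H hi)
  · exact (h R).of_lIso (lIso_shadow_fuse_of_not_mem R H hi)

theorem join_comm (H : LGraph k) (i j : Fin k) : H.join i j = H.join j i := by
  change LGraph.mk _ _ _ = LGraph.mk _ _ _
  congr 1
  ext u v
  exact or_congr_right (and_congr_right fun _ => or_comm)

theorem shadowLabels_join {v : H.V}
    (hv : ∀ w, H.lab w ∉ R → ¬ ((H.lab v = i ∧ H.lab w = j) ∨ (H.lab v = j ∧ H.lab w = i))) :
    (H.join i j).shadowLabels R v = H.shadowLabels R v := by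
  ext c
  refine or_congr Iff.rfl (and_congr_right fun hc => exists_congr fun w =>
    and_congr_right fun hw => ⟨?_, .inl⟩)
  rintro (hadj | ⟨-, hlab⟩)
  exacts [hadj, absurd hlab (hv w (hw ▸ hc))]

theorem lIso_shadow_join_of_mem (hi : i ∈ R) (hj : j ∈ R) :
    ((H.shadow R).join i.castSucc j.castSucc).LIso ((H.join i j).shadow R) := by
  have hmem {c : Fin k} (hc : c ∈ R) (v : (H.shadow R).V) :=
    castSucc_mem_shadow_lab_of_mem (v := v) hc
  refine ⟨⟨.refl _, fun {u v} => ?_⟩, fun v => ?_⟩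
  · exact (or_congr Iff.rfl (and_congr Subtype.ext_iff.not (or_congr
      (and_congr (hmem hi u) (hmem hj v)) (and_congr (hmem hj u) (hmem hi v))))).symm
  · refine congrArg (Fin.castSucc '' ·) (shadowLabels_join fun w hw => ?_)
    rintro (⟨-, hwj⟩ | ⟨-, hwi⟩)
    exacts [hw (hwj ▸ hj), hw (hwi ▸ hi)]

theorem lIso_shadow_join_of_no_new_edge
    (h : ∀ u w, H.lab u ∈ R → ¬ ((H.lab u = i ∧ H.lab w = j) ∨ (H.lab u = j ∧ H.lab w = i))) :
    (H.shadow R).LIso ((H.join i j).shadow R) := by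
  refine ⟨⟨.refl _, fun {u v} => ⟨?_, .inl⟩⟩, fun v =>
    congrArg (Fin.castSucc '' ·) (shadowLabels_join fun w _ => h v.1 w v.2)⟩
  rintro (hadj | ⟨-, hlab⟩)
  exacts [hadj, absurd hlab (h u.1 v.1 u.2)]

theorem shadowLabels_join_of_mem_of_not_mem (hi : i ∈ R) (hj : j ∉ R) (hex : ∃ w, H.lab w = j)
    (v : H.V) :
    (H.join i j).shadowLabels R v = H.shadowLabels R v ∪ {c | H.lab v = i ∧ c = j} := by
  obtain ⟨w₀, hw₀⟩ := hex
  -- an `i`-vertex `v` gains the neighbour `w₀`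
  ext c
  simp only [shadowLabels, Set.mem_union, Set.mem_ofPred_eq]
  change (c ∈ R ∧ H.lab v = c ∨ c ∉ R ∧ ∃ w, H.lab w = c ∧ (H.G.Adj v w ∨ (v ≠ w ∧
    ((H.lab v = i ∧ H.lab w = j) ∨ (H.lab v = j ∧ H.lab w = i))))) ↔ _
  grind

theorem lIso_shadow_join_of_mem_of_not_mem (hi : i ∈ R) (hj : j ∉ R) (hex : ∃ w, H.lab w = j) :
    ((H.shadow R).relabel i.castSucc {i.castSucc, j.castSucc}).LIso ((H.join i j).shadow R) := by
  refine ⟨⟨.refl _, fun {u v} => ⟨?_, .inl⟩⟩, fun v => ?_⟩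
  · rintro (hadj | ⟨-, ⟨-, hvj⟩ | ⟨huj, -⟩⟩)
    exacts [hadj, (hj (hvj ▸ v.2)).elim, (hj (huj ▸ u.2)).elim]
  · refine (congrArg (Fin.castSucc '' ·)
      (shadowLabels_join_of_mem_of_not_mem hi hj hex v.1)).trans
      (Eq.trans ?_ (MGraph.relabel_insert_self_lab (H.shadow R) i.castSucc j.castSucc v).symm)
    rw [Set.image_union]
    have hv := castSucc_mem_shadow_lab_of_mem (v := (v : (H.shadow R).V)) hi
    congr 1
    ext d
    simp only [Set.mem_image, Set.mem_ofPred_eq, hv]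
    constructor
    · rintro ⟨c, ⟨h, rfl⟩, rfl⟩
      exact ⟨h, rfl⟩
    · rintro ⟨h, rfl⟩
      exact ⟨j, ⟨h, rfl⟩, rfl⟩

theorem realizable_shadow_join_of_mem_of_not_mem (hi : i ∈ R) (hj : j ∉ R)
    (h : (H.shadow R).Realizable) : ((H.join i j).shadow R).Realizable := by
  by_cases hex : ∃ w, H.lab w = j
  · exact (h.relabel _ _).of_lIso (lIso_shadow_join_of_mem_of_not_mem hi hj hex)
  · refine h.of_lIso (lIso_shadow_join_of_no_new_edge fun u w hu => ?_)
    rintro (⟨-, hw⟩ | ⟨hu', -⟩)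
    exacts [hex ⟨w, hw⟩, hj (hu' ▸ hu)]

theorem realizable_shadow_join (hij : i ≠ j) (h : (H.shadow R).Realizable) :
    ((H.join i j).shadow R).Realizable := by
  by_cases hi : i ∈ R <;> by_cases hj : j ∈ R
  · refine (h.join ((Fin.castSucc_injective k).ne hij) ?_).of_lIso (lIso_shadow_join_of_mem hi hj)
    rintro v ⟨hvi, hvj⟩
    exact hij (((castSucc_mem_shadow_lab_of_mem hi).1 hvi).symm.trans
      ((castSucc_mem_shadow_lab_of_mem hj).1 hvj))
  · exact realizable_shadow_join_of_mem_of_not_mem hi hj h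
  · exact join_comm H i j ▸ realizable_shadow_join_of_mem_of_not_mem hj hi h
  · refine h.of_lIso (lIso_shadow_join_of_no_new_edge fun u w hu => ?_)
    rintro (⟨hu', -⟩ | ⟨hu', -⟩)
    exacts [hi (hu' ▸ hu), hj (hu' ▸ hu)]

def joinPairs (P : List (Fin k × Fin k)) (H : LGraph k) : LGraph k where
  V := H.V
  G := H.G ⊔ SimpleGraph.fromRel fun u v => (H.lab u, H.lab v) ∈ P
  lab := H.lab

theorem joinPairs_nil (H : LGraph k) : H.joinPairs [] = H := by
  change LGraph.mk _ _ _ = LGraph.mk _ _ _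
  congr 1
  ext u v
  simp

theorem join_joinPairs (H : LGraph k) (p : Fin k × Fin k) (P : List (Fin k × Fin k)) :
    (H.joinPairs P).join p.1 p.2 = H.joinPairs (p :: P) := by
  change LGraph.mk _ _ _ = LGraph.mk _ _ _
  congr 1
  ext u v
  change (H.G.Adj u v ∨ (u ≠ v ∧ ((H.lab u, H.lab v) ∈ P ∨ (H.lab v, H.lab u) ∈ P))) ∨
      (u ≠ v ∧ ((H.lab u = p.1 ∧ H.lab v = p.2) ∨ (H.lab u = p.2 ∧ H.lab v = p.1))) ↔
    H.G.Adj u v ∨ (u ≠ v ∧ ((H.lab u, H.lab v) ∈ p :: P ∨ (H.lab v, H.lab u) ∈ p :: P))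
  simp only [List.mem_cons, Prod.ext_iff]
  tauto

end LGraph

namespace FuseExpr

variable {k : ℕ}

theorem realizable_shadow_eval : ∀ φ : FuseExpr k, φ.WF → ∀ R, (φ.eval.shadow R).Realizable
  | .intro i, _, R => LGraph.realizable_shadow_singleVertex R i
  | .union φ₁ φ₂, ⟨h₁, h₂⟩, R => ((realizable_shadow_eval φ₁ h₁ R).union
      (realizable_shadow_eval φ₂ h₂ R)).of_lIso (LGraph.lIso_shadow_union R _ _)
  | .join _ _ φ, ⟨hij, h⟩, R => LGraph.realizable_shadow_join hij (realizable_shadow_eval φ h R)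
  | .relabel a b φ, ⟨_, h⟩, R => ((realizable_shadow_eval φ h _).relabel _ _).of_lIso
      (LGraph.lIso_shadow_relabel R _ a b)
  | .fuse i φ, ⟨h, _⟩, R => LGraph.realizable_shadow_fuse (realizable_shadow_eval φ h) R i

theorem nonempty_eval : ∀ φ : FuseExpr k, Nonempty φ.eval.V
  | .intro _ => ⟨PUnit.unit⟩
  | .union φ₁ _ => ⟨.inl (nonempty_eval φ₁).some⟩
  | .join _ _ φ | .relabel _ _ φ => nonempty_eval φ
  | .fuse _ _ => ⟨none⟩

def isolated : (n : ℕ) → (Fin (n + 1) → Fin k) → FuseExpr k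
  | 0, f => intro (f 0)
  | n + 1, f => union (intro (f 0)) (isolated n (Fin.tail f))

def joinAll (P : List (Fin k × Fin k)) (φ : FuseExpr k) : FuseExpr k :=
  P.foldr (fun p ψ => join p.1 p.2 ψ) φ

theorem wf_isolated : ∀ (n : ℕ) (f : Fin (n + 1) → Fin k), (isolated n f).WF
  | 0, _ => trivial
  | n + 1, f => ⟨trivial, wf_isolated n (Fin.tail f)⟩

theorem not_adj_eval_isolated :
    ∀ (n : ℕ) (f : Fin (n + 1) → Fin k) (x y : (isolated n f).eval.V),
      ¬ (isolated n f).eval.G.Adj x y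
  | 0, _, _, _ => id
  | n + 1, f, .inr x, .inr y => not_adj_eval_isolated n (Fin.tail f) x y
  | _ + 1, _, .inl _, .inl _ | _ + 1, _, .inl _, .inr _ | _ + 1, _, .inr _, .inl _ => nofun

theorem exists_equiv_eval_isolated : ∀ (n : ℕ) (f : Fin (n + 1) → Fin k),
    ∃ β : (isolated n f).eval.V ≃ Fin (n + 1), ∀ x, (isolated n f).eval.lab x = f (β x)
  | 0, f => ⟨Equiv.ofUnique PUnit (Fin 1),
      fun _ => congrArg f (Subsingleton.elim (α := Fin 1) _ _)⟩
  | n + 1, f => by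
    obtain ⟨β, hβ⟩ := exists_equiv_eval_isolated n (Fin.tail f)
    refine ⟨(Equiv.sumCongr (.refl PUnit) β).trans ((Equiv.sumComm _ _).trans
      ((Equiv.optionEquivSumPUnit _).symm.trans (finSuccEquiv (n + 1)).symm)), ?_⟩
    rintro (x | x)
    · rfl
    · exact (hβ x).trans (congrArg f (finSuccEquiv_symm_some _).symm)

theorem wf_joinAll {P : List (Fin k × Fin k)} (hP : ∀ p ∈ P, p.1 ≠ p.2) {φ : FuseExpr k}
    (hφ : φ.WF) : (joinAll P φ).WF := by
  induction P with
  | nil => exact hφ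
  | cons p P ih =>
    exact ⟨hP p List.mem_cons_self, ih fun q hq => hP q (List.mem_cons_of_mem p hq)⟩

theorem eval_joinAll (P : List (Fin k × Fin k)) (φ : FuseExpr k) :
    (joinAll P φ).eval = φ.eval.joinPairs P := by
  induction P with
  | nil => exact φ.eval.joinPairs_nil.symm
  | cons p P ih => exact (congrArg (LGraph.join p.1 p.2) ih).trans (φ.eval.join_joinPairs p P)

end FuseExpr

theorem MultiExpr.nonempty_eval {k : ℕ} : ∀ ψ : MultiExpr k, Nonempty ψ.eval.V
  | .intro _ => ⟨PUnit.unit⟩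
  | .union ψ₁ _ => ⟨.inl (nonempty_eval ψ₁).some⟩
  | .join _ _ ψ | .relabel _ _ ψ => nonempty_eval ψ

theorem multiAdmits_succ_of_fuseAdmits {V : Type} {G : SimpleGraph V} {k : ℕ} :
    FuseAdmits k G → MultiAdmits (k + 1) G := by
  rintro ⟨φ, hφ, ⟨e⟩⟩
  rcases φ.realizable_shadow_eval hφ Set.univ with hempty | ⟨ψ, hψ, f, -⟩
  · obtain ⟨v⟩ := φ.nonempty_eval
    exact (hempty.false ⟨v, trivial⟩).elim
  · exact ⟨ψ, hψ, ⟨f.trans (φ.eval.G.induceUnivIso.trans e)⟩⟩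

theorem exists_fuseAdmits {V : Type} [Fintype V] [Nonempty V] (G : SimpleGraph V) :
    ∃ k, FuseAdmits k G := by
  classical
  obtain ⟨n, hn⟩ := Nat.exists_eq_succ_of_ne_zero (Fintype.card_ne_zero (α := V))
  let e : V ≃ Fin (n + 1) := (Fintype.equivFin V).trans (finCongr hn)
  let P := (Finset.univ.filter fun p : Fin (n + 1) × Fin (n + 1) =>
    G.Adj (e.symm p.1) (e.symm p.2)).toList
  have hP (p) : p ∈ P ↔ G.Adj (e.symm p.1) (e.symm p.2) := by simp [P]
  have hPne (p) (hp : p ∈ P) : p.1 ≠ p.2 := fun h => G.ne_of_adj ((hP p).1 hp) (by rw [h])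
  obtain ⟨β, hβ⟩ := FuseExpr.exists_equiv_eval_isolated n id
  refine ⟨n + 1, .joinAll P (.isolated n id),
    FuseExpr.wf_joinAll hPne (FuseExpr.wf_isolated n id), ⟨?_⟩⟩
  rw [FuseExpr.eval_joinAll]
  refine ⟨β.trans e.symm, fun {x y} => ?_⟩
  change _ ↔ (FuseExpr.isolated n id).eval.G.Adj x y ∨ (x ≠ y ∧ (_ ∈ P ∨ _ ∈ P))
  simp only [hP, or_iff_right (FuseExpr.not_adj_eval_isolated n id x y)]
  rw [hβ x, hβ y]
  exact ⟨fun h => ⟨fun hxy => G.ne_of_adj h (by rw [hxy]), .inl h⟩,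
    fun h => h.2.elim id G.adj_symm⟩

theorem mcw_le_fw_succ {V : Type} [Fintype V] (G : SimpleGraph V) : mcw G ≤ fw G + 1 := by
  rcases Set.eq_empty_or_nonempty {k | FuseAdmits k G} with hF | hF
  · -- `fw G = sInf ∅ = 0`; then `V` is empty, so `mcw G = 0` as well.
    suffices {k | MultiAdmits k G} = ∅ by simp [mcw, this]
    refine Set.eq_empty_of_forall_notMem fun m ⟨ψ, _, ⟨e⟩⟩ => ?_
    have : Nonempty V := ⟨e ψ.nonempty_eval.some⟩
    obtain ⟨k, hk⟩ := exists_fuseAdmits G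
    exact hF.subset hk
  · exact Nat.sInf_le (multiAdmits_succ_of_fuseAdmits (Nat.sInf_mem hF))

/-- If a finite simple graph `G` admits a fuse-`k`-expression (`k ≥ 1`),
then it admits a multi-`(k+1)`-expression; consequently `mcw(G) ≤ fw(G) + 1`. -/
theorem mcw_le_fw_add_one :
    (∀ (V : Type) [Fintype V] (G : SimpleGraph V) (k : ℕ), 1 ≤ k →
      FuseAdmits k G → MultiAdmits (k + 1) G) ∧
    (∀ (V : Type) [Fintype V] (G : SimpleGraph V), mcw G ≤ fw G + 1) :=
  ⟨fun _ _ _ _ _ => multiAdmits_succ_of_fuseAdmits, fun _ _ => mcw_le_fw_succ⟩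
end

section
/- Let k ∈ ℕ, q ≥ 1, let H be a k-labeled graph, and let i, b, a_1, …, a_q ∈ Fin k with b ∉ {a_1, …, a_q, i}. Assume no operator occurrence on the left-hand side is useless. Then θ_i(ρ_{a_1→i}(⋯ ρ_{a_q→i}(ρ_{i→b}(H)) ⋯)) = ρ_{a_1→i}(θ_{a_1}(ρ_{a_2→a_1}(⋯ ρ_{a_q→a_1}(ρ_{i→b}(H)) ⋯))) as k-labeled graphs, up to label-preserving isomorphism. -/
open LGraph

theorem ite_mem_cons_eq_iff {α : Type*} [DecidableEq α] {x i a : α} {as : List α}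
    (hx : x ≠ i) : (if x ∈ a :: as then i else x) = i ↔ (if x ∈ as then a else x) = a := by
  split_ifs <;> simp_all

theorem ite_mem_eq_ite_mem_cons_of_ne {α : Type*} [DecidableEq α] {x i a : α} {as : List α}
    (h : (if x ∈ a :: as then i else x) ≠ i) :
    (if x ∈ as then a else x) = if x ∈ a :: as then i else x := by
  split_ifs <;> simp_all

namespace LGraph

variable {k : ℕ}

theorem relabelSeq_eq (i : Fin k) (as : List (Fin k)) (H : LGraph k) :
    relabelSeq i as H = ⟨H.V, H.G, fun v => if H.lab v ∈ as then i else H.lab v⟩ := by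
  induction as with
  | nil => simp [relabelSeq]
  | cons a as ih =>
    rw [relabelSeq, ih]
    simp only [relabel, LGraph.mk.injEq, heq_eq_eq, true_and, List.mem_cons]
    funext v
    split_ifs <;> simp_all

theorem relabel_lab_ne {a b : Fin k} (hab : a ≠ b) (H : LGraph k) (v : H.V) :
    (relabel a b H).lab v ≠ a := by
  simp only [relabel]
  split_ifs <;> simp_all [eq_comm]

theorem fuse_liso_relabel_fuse {V : Type} (G : SimpleGraph V) {f g : V → Fin k} {i j : Fin k}
    (hfg : ∀ v, f v = i ↔ g v = j) (hoff : ∀ v, f v ≠ i → g v = f v) :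
    LIso (fuse i ⟨V, G, f⟩) (relabel j i (fuse j ⟨V, G, g⟩)) := by
  let e := Equiv.subtypeEquivRight fun v => not_congr (hfg v)
  refine ⟨⟨e.optionCongr, ?_⟩, ?_⟩
  · rintro (_ | u) (_ | v)
    · exact Iff.rfl
    · exact exists_congr fun w => and_congr_left' (hfg w).symm
    · exact exists_congr fun w => and_congr_left' (hfg w).symm
    · exact Iff.rfl
  · rintro (_ | ⟨u, hu⟩)
    · exact if_pos rfl
    · show (if g u = j then i else g u) = f u
      rw [if_neg ((hfg u).not.mp hu), hoff u hu]

end LGraph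

theorem fuse_relabelSeq_relabel_from_i_general {k : ℕ} (H : LGraph k) (i b a1 : Fin k)
    (rest : List (Fin k))
    (hib : i ≠ b) :
    LIso (fuse i (relabelSeq i (a1 :: rest) (relabel i b H)))
         (relabel a1 i (fuse a1 (relabelSeq a1 rest (relabel i b H)))) := by
  rw [relabelSeq_eq, relabelSeq_eq]
  exact fuse_liso_relabel_fuse _ (fun v => ite_mem_cons_eq_iff (relabel_lab_ne hib H v))
    fun _ => ite_mem_eq_ite_mem_cons_of_ne

/-- rule 8: if `q ≥ 1` and `b ∉ {a₁, …, a_q, i}`, then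
`θ_i(ρ_{a₁→i}(⋯ρ_{a_q→i}(ρ_{i→b}(H))⋯)) = ρ_{a₁→i}(θ_{a₁}(ρ_{a₂→a₁}(⋯ρ_{a_q→a₁}(ρ_{i→b}(H))⋯)))`
provided that no operator occurrence on the left-hand side is useless.
Here the nonempty list of labels is `a₁ :: rest = [a₁, …, a_q]`. -/
theorem fuse_relabelSeq_relabel_from_i {k : ℕ} (H : LGraph k) (i b a1 : Fin k)
    (rest : List (Fin k))
    (hb : b ∉ (a1 :: rest) ∧ b ≠ i) (hib : i ≠ b)
    (hinner : relabelUseful i H)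
    (hseq : relabelSeqUseful i (a1 :: rest) (relabel i b H))
    (hfuse : fuseUseful i (relabelSeq i (a1 :: rest) (relabel i b H))) :
    LIso (fuse i (relabelSeq i (a1 :: rest) (relabel i b H)))
         (relabel a1 i (fuse a1 (relabelSeq a1 rest (relabel i b H)))) :=
  fuse_relabelSeq_relabel_from_i_general H i b a1 rest hib
end

section
/- Let H1, H2 be glueable, edge-disjoint k-labeled graphs with shared vertices {v_1, …, v_q} = V(H1) ∩ V(H2) of labels i_1, …, i_q respectively, and let H = H1 ⊔ H2. Then for every vector (s_1, …, s_k, r) with 0 ≤ s_i ≤ |U_i^H| for all i and 0 ≤ r ≤ |E(H)|: the vector is witnessed by some partition of V(H) if and only if there exist a vector (s^1_1, …, s^1_k, r^1) with 0 ≤ r^1 ≤ |E(H1)| witnessed in H1 and a vector (s^2_1, …, s^2_k, r^2) with 0 ≤ r^2 ≤ |E(H2)| witnessed in H2 such that: s^1_{i_j} = s^2_{i_j} for every j ∈ {1, …, q}; r ≤ r^1 + r^2; s_i = s^1_i + s^2_i for every label i ∉ {i_1, …, i_q}; and s_{i_j} = s^1_{i_j} · s^2_{i_j} for every j ∈ {1,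 …, q}. -/
open SimpleGraph

variable {U : Type} {k : ℕ}

/-- The set `U_i^H` of vertices of `H` carrying label `i` (under the labeling `lab`). -/
def labelSet (H : Subgraph (⊤ : SimpleGraph U)) (lab : U → Fin k) (i : Fin k) : Set U :=
  {v ∈ H.verts | lab v = i}

/-- Two `k`-labeled graphs on vertex subsets of a common universe are *glueable*:
every shared vertex has the same label in both graphs and is the unique vertex of its
label in each of them. -/
def Glueable (H1 H2 : Subgraph (⊤ : SimpleGraph U)) (lab1 lab2 : U → Fin k) : Prop :=
  ∀ v ∈ H1.verts ∩ H2.verts,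
    lab1 v = lab2 v ∧
    (∀ w ∈ H1.verts, lab1 w = lab1 v → w = v) ∧
    (∀ w ∈ H2.verts, lab2 w = lab2 v → w = v)

/-- The cut `E_H(V1, V2)`: the set of edges of `H` with one endpoint in `V1` and one
endpoint in `V2`. -/
def cutEdges (H : Subgraph (⊤ : SimpleGraph U)) (V1 V2 : Set U) : Set (Sym2 U) :=
  {e | e ∈ H.edgeSet ∧ ∃ u v, u ∈ V1 ∧ v ∈ V2 ∧ e = s(u, v)}

/-- A partition `(V1, V2)` of the vertex set of the `k`-labeled graph `H` *witnesses*
the Max-Cut vector `(s₁, …, s_k, r)` if `|V1 ∩ U_i^H| = s i` for every label `i` and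
there are at least `r` edges between `V1` and `V2` in `H`. -/
def MaxCutWitnessed (H : Subgraph (⊤ : SimpleGraph U)) (lab : U → Fin k)
    (s : Fin k → ℕ) (r : ℕ) : Prop :=
  ∃ V1 V2 : Set U, V1 ∪ V2 = H.verts ∧ Disjoint V1 V2 ∧
    (∀ i, (V1 ∩ labelSet H lab i).ncard = s i) ∧
    r ≤ (cutEdges H V1 V2).ncard

/-- correctness of the Max-Cut glue procedure. -/
theorem maxCut_glue_tables [Fintype U]
    (H1 H2 : Subgraph (⊤ : SimpleGraph U)) (lab1 lab2 labH : U → Fin k)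
    (hglue : Glueable H1 H2 lab1 lab2)
    (hedisj : H1.edgeSet ∩ H2.edgeSet = ∅)
    (hlab1 : ∀ v ∈ H1.verts, labH v = lab1 v)
    (hlab2 : ∀ v ∈ H2.verts, labH v = lab2 v)
    (s : Fin k → ℕ) (r : ℕ)
    (hs : ∀ i, s i ≤ (labelSet (H1 ⊔ H2) labH i).ncard)
    (hr : r ≤ ((H1 ⊔ H2).edgeSet).ncard) :
    MaxCutWitnessed (H1 ⊔ H2) labH s r ↔
      ∃ (s1 s2 : Fin k → ℕ) (r1 r2 : ℕ),
        r1 ≤ H1.edgeSet.ncard ∧ r2 ≤ H2.edgeSet.ncard ∧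
        MaxCutWitnessed H1 lab1 s1 r1 ∧ MaxCutWitnessed H2 lab2 s2 r2 ∧
        (∀ i, (∃ v ∈ H1.verts ∩ H2.verts, lab1 v = i) → s1 i = s2 i) ∧
        r ≤ r1 + r2 ∧
        (∀ i, ¬ (∃ v ∈ H1.verts ∩ H2.verts, lab1 v = i) → s i = s1 i + s2 i) ∧
        (∀ i, (∃ v ∈ H1.verts ∩ H2.verts, lab1 v = i) → s i = s1 i * s2 i) := by
  classical
  -- the label set of the glued graph is the union of the label sets
  have hlabelU : ∀ i, labelSet (H1 ⊔ H2) labH i = labelSet H1 lab1 i ∪ labelSet H2 lab2 i := by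
    intro i
    ext w
    simp only [labelSet, Subgraph.verts_sup, Set.mem_union, Set.mem_setOf_eq, Set.mem_sep_iff]
    constructor
    · rintro ⟨hw | hw, hl⟩
      · exact Or.inl ⟨hw, by rw [← hlab1 w hw]; exact hl⟩
      · exact Or.inr ⟨hw, by rw [← hlab2 w hw]; exact hl⟩
    · rintro (⟨hw, hl⟩ | ⟨hw, hl⟩)
      · exact ⟨Or.inl hw, by rw [hlab1 w hw]; exact hl⟩
      · exact ⟨Or.inr hw, by rw [hlab2 w hw]; exact hl⟩
  -- a shared vertex is the unique vertex of its label in both graphs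
  have hsing : ∀ v ∈ H1.verts ∩ H2.verts,
      labelSet H1 lab1 (lab1 v) = {v} ∧ labelSet H2 lab2 (lab1 v) = {v} := by
    intro v hv
    obtain ⟨hl12, hu1, hu2⟩ := hglue v hv
    constructor
    · ext w
      simp only [labelSet, Set.mem_sep_iff, Set.mem_singleton_iff]
      constructor
      · rintro ⟨hw, he⟩; exact hu1 w hw he
      · rintro rfl; exact ⟨hv.1, rfl⟩
    · ext w
      simp only [labelSet, Set.mem_sep_iff, Set.mem_singleton_iff]
      constructor
      · rintro ⟨hw, he⟩; exact hu2 w hw (he.trans hl12)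
      · rintro rfl; exact ⟨hv.2, hl12.symm⟩
  -- for a non-shared label, the two label sets are disjoint
  have hdisjlab : ∀ i, ¬(∃ v ∈ H1.verts ∩ H2.verts, lab1 v = i) →
      Disjoint (labelSet H1 lab1 i) (labelSet H2 lab2 i) := by
    intro i hni
    rw [Set.disjoint_left]
    rintro w ⟨hw1, hl1⟩ ⟨hw2, hl2⟩
    exact hni ⟨w, ⟨hw1, hw2⟩, hl1⟩
  have ncsing : ∀ (S : Set U) (v : U), (S ∩ ({v} : Set U)).ncard = if v ∈ S then 1 else 0 := by
    intro S v
    by_cases h : v ∈ S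
    · rw [Set.inter_eq_right.mpr (Set.singleton_subset_iff.mpr h), Set.ncard_singleton, if_pos h]
    · rw [Set.inter_singleton_eq_empty.mpr h, Set.ncard_empty, if_neg h]
  constructor
  · -- forward direction
    rintro ⟨V1, V2, hun, hdis, hcount, hcut⟩
    rw [Subgraph.verts_sup] at hun
    refine ⟨fun i => ((V1 ∩ H1.verts) ∩ labelSet H1 lab1 i).ncard,
            fun i => ((V1 ∩ H2.verts) ∩ labelSet H2 lab2 i).ncard,
            (cutEdges H1 (V1 ∩ H1.verts) (V2 ∩ H1.verts)).ncard,
            (cutEdges H2 (V1 ∩ H2.verts) (V2 ∩ H2.verts)).ncard,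
            Set.ncard_le_ncard (fun e he => he.1) (Set.toFinite _),
            Set.ncard_le_ncard (fun e he => he.1) (Set.toFinite _),
            ⟨V1 ∩ H1.verts, V2 ∩ H1.verts, ?_, hdis.mono Set.inter_subset_left Set.inter_subset_left,
              fun i => rfl, le_refl _⟩,
            ⟨V1 ∩ H2.verts, V2 ∩ H2.verts, ?_, hdis.mono Set.inter_subset_left Set.inter_subset_left,
              fun i => rfl, le_refl _⟩, ?_, ?_, ?_, ?_⟩
    · rw [← Set.union_inter_distrib_right, hun, Set.union_inter_cancel_left]
    · rw [← Set.union_inter_distrib_right, hun, Set.union_inter_cancel_right]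
    · -- equal counts on shared labels
      rintro i ⟨v, hv, rfl⟩
      obtain ⟨h1s, h2s⟩ := hsing v hv
      beta_reduce
      rw [h1s, h2s, Set.inter_assoc, Set.inter_assoc]
      have e1 : H1.verts ∩ ({v} : Set U) = {v} :=
        Set.inter_eq_right.mpr (Set.singleton_subset_iff.mpr hv.1)
      have e2 : H2.verts ∩ ({v} : Set U) = {v} :=
        Set.inter_eq_right.mpr (Set.singleton_subset_iff.mpr hv.2)
      rw [e1, e2]
    · -- r ≤ r1 + r2
      have hsubcut : cutEdges (H1 ⊔ H2) V1 V2 ⊆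
          cutEdges H1 (V1 ∩ H1.verts) (V2 ∩ H1.verts) ∪
          cutEdges H2 (V1 ∩ H2.verts) (V2 ∩ H2.verts) := by
        rintro e ⟨he, u, w, hu, hw, rfl⟩
        rw [Subgraph.edgeSet_sup, Set.mem_union] at he
        rcases he with he | he
        · have hadj : H1.Adj u w := he
          exact Or.inl ⟨he, u, w, ⟨hu, H1.edge_vert hadj⟩, ⟨hw, H1.edge_vert hadj.symm⟩, rfl⟩
        · have hadj : H2.Adj u w := he
          exact Or.inr ⟨he, u, w, ⟨hu, H2.edge_vert hadj⟩, ⟨hw, H2.edge_vert hadj.symm⟩, rfl⟩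
      calc r ≤ (cutEdges (H1 ⊔ H2) V1 V2).ncard := hcut
        _ ≤ _ := Set.ncard_le_ncard hsubcut (Set.toFinite _)
        _ ≤ _ := Set.ncard_union_le _ _
    · -- counts add on non-shared labels
      intro i hni
      beta_reduce
      rw [← hcount i, hlabelU i]
      have hL1 : (V1 ∩ H1.verts) ∩ labelSet H1 lab1 i = V1 ∩ labelSet H1 lab1 i := by
        rw [Set.inter_assoc]
        congr 1
        exact Set.inter_eq_right.mpr fun w hw => hw.1
      have hL2 : (V1 ∩ H2.verts) ∩ labelSet H2 lab2 i = V1 ∩ labelSet H2 lab2 i := by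
        rw [Set.inter_assoc]
        congr 1
        exact Set.inter_eq_right.mpr fun w hw => hw.1
      rw [hL1, hL2, Set.inter_union_distrib_left,
        Set.ncard_union_eq ((hdisjlab i hni).mono Set.inter_subset_right Set.inter_subset_right)
          (Set.toFinite _) (Set.toFinite _)]
    · -- counts multiply on shared labels
      rintro i ⟨v, hv, rfl⟩
      obtain ⟨h1s, h2s⟩ := hsing v hv
      beta_reduce
      rw [← hcount (lab1 v), hlabelU (lab1 v), h1s, h2s, Set.union_self]
      have e1 : H1.verts ∩ ({v} : Set U) = {v} :=
        Set.inter_eq_right.mpr (Set.singleton_subset_iff.mpr hv.1)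
      have e2 : H2.verts ∩ ({v} : Set U) = {v} :=
        Set.inter_eq_right.mpr (Set.singleton_subset_iff.mpr hv.2)
      rw [Set.inter_assoc, Set.inter_assoc, e1, e2, ncsing]
      by_cases h : v ∈ V1 <;> simp [h]
  · -- backward direction
    rintro ⟨s1, s2, r1, r2, hr1, hr2, ⟨A1, B1, hun1, hdis1, hcnt1, hcut1⟩,
      ⟨A2, B2, hun2, hdis2, hcnt2, hcut2⟩, hshare, hrle, hadd, hmul⟩
    have hA1v : A1 ⊆ H1.verts := hun1 ▸ Set.subset_union_left
    have hB1v : B1 ⊆ H1.verts := hun1 ▸ Set.subset_union_right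
    have hA2v : A2 ⊆ H2.verts := hun2 ▸ Set.subset_union_left
    have hB2v : B2 ⊆ H2.verts := hun2 ▸ Set.subset_union_right
    -- on shared vertices the two partitions agree
    have hkey : ∀ v ∈ H1.verts ∩ H2.verts, (v ∈ A1 ↔ v ∈ A2) := by
      intro v hv
      obtain ⟨h1s, h2s⟩ := hsing v hv
      have e1 := hcnt1 (lab1 v); rw [h1s, ncsing] at e1
      have e2 := hcnt2 (lab1 v); rw [h2s, ncsing] at e2
      have heq : (if v ∈ A1 then 1 else 0 : ℕ) = if v ∈ A2 then 1 else 0 := by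
        rw [e1, e2]; exact hshare _ ⟨v, hv, rfl⟩
      by_cases h1 : v ∈ A1 <;> by_cases h2 : v ∈ A2 <;> simp [h1, h2] at heq ⊢
    refine ⟨A1 ∪ A2, B1 ∪ B2, ?_, ?_, ?_, ?_⟩
    · rw [Subgraph.verts_sup, ← hun1, ← hun2]
      ext w; simp only [Set.mem_union]; tauto
    · -- disjointness
      rw [Set.disjoint_union_left, Set.disjoint_union_right, Set.disjoint_union_right]
      refine ⟨⟨hdis1, ?_⟩, ⟨?_, hdis2⟩⟩
      · rw [Set.disjoint_left]
        intro w hw1 hw2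
        have hsh : w ∈ H1.verts ∩ H2.verts := ⟨hA1v hw1, hB2v hw2⟩
        exact (Set.disjoint_left.mp hdis2) ((hkey w hsh).mp hw1) hw2
      · rw [Set.disjoint_left]
        intro w hw2 hw1
        have hsh : w ∈ H1.verts ∩ H2.verts := ⟨hB1v hw1, hA2v hw2⟩
        exact (Set.disjoint_left.mp hdis1) ((hkey w hsh).mpr hw2) hw1
    · -- the counts
      intro i
      by_cases hi : ∃ v ∈ H1.verts ∩ H2.verts, lab1 v = i
      · obtain ⟨v, hv, rfl⟩ := hi
        obtain ⟨h1s, h2s⟩ := hsing v hv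
        rw [hlabelU (lab1 v), h1s, h2s, Set.union_self, ncsing,
          hmul (lab1 v) ⟨v, hv, rfl⟩, ← hcnt1 (lab1 v), ← hcnt2 (lab1 v), h1s, h2s,
          ncsing, ncsing]
        have hiff := hkey v hv
        by_cases h : v ∈ A1
        · simp [h, hiff.mp h]
        · have h2 : v ∉ A2 := fun hh => h (hiff.mpr hh)
          simp [h, h2]
      · rw [hlabelU i]
        have hempty1 : A1 ∩ labelSet H2 lab2 i = ∅ := by
          ext w
          simp only [Set.mem_inter_iff, Set.mem_empty_iff_false, iff_false, not_and]
          rintro hw ⟨hw2, hl2⟩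
          exact hi ⟨w, ⟨hA1v hw, hw2⟩, (hglue w ⟨hA1v hw, hw2⟩).1.trans hl2⟩
        have hempty2 : A2 ∩ labelSet H1 lab1 i = ∅ := by
          ext w
          simp only [Set.mem_inter_iff, Set.mem_empty_iff_false, iff_false, not_and]
          rintro hw ⟨hw1, hl1⟩
          exact hi ⟨w, ⟨hw1, hA2v hw⟩, hl1⟩
        have hsplit : (A1 ∪ A2) ∩ (labelSet H1 lab1 i ∪ labelSet H2 lab2 i) =
            (A1 ∩ labelSet H1 lab1 i) ∪ (A2 ∩ labelSet H2 lab2 i) := by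
          rw [Set.union_inter_distrib_right, Set.inter_union_distrib_left,
            Set.inter_union_distrib_left, hempty1, hempty2, Set.union_empty, Set.empty_union]
        rw [hsplit, Set.ncard_union_eq
          ((hdisjlab i hi).mono Set.inter_subset_right Set.inter_subset_right)
          (Set.toFinite _) (Set.toFinite _), hcnt1, hcnt2, hadd i hi]
    · -- the cut
      have hsub1 : cutEdges H1 A1 B1 ⊆ cutEdges (H1 ⊔ H2) (A1 ∪ A2) (B1 ∪ B2) := by
        rintro e ⟨he, u, w, hu, hw, rfl⟩
        exact ⟨by rw [Subgraph.edgeSet_sup]; exact Or.inl he, u, w, Or.inl hu, Or.inl hw, rfl⟩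
      have hsub2 : cutEdges H2 A2 B2 ⊆ cutEdges (H1 ⊔ H2) (A1 ∪ A2) (B1 ∪ B2) := by
        rintro e ⟨he, u, w, hu, hw, rfl⟩
        exact ⟨by rw [Subgraph.edgeSet_sup]; exact Or.inr he, u, w, Or.inr hu, Or.inr hw, rfl⟩
      have hcd : Disjoint (cutEdges H1 A1 B1) (cutEdges H2 A2 B2) := by
        rw [Set.disjoint_left]
        intro e he1 he2
        have : e ∈ H1.edgeSet ∩ H2.edgeSet := ⟨he1.1, he2.1⟩
        rw [hedisj] at this
        exact this
      calc r ≤ r1 + r2 := hrle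
        _ ≤ (cutEdges H1 A1 B1).ncard + (cutEdges H2 A2 B2).ncard := Nat.add_le_add hcut1 hcut2
        _ = (cutEdges H1 A1 B1 ∪ cutEdges H2 A2 B2).ncard :=
          (Set.ncard_union_eq hcd (Set.toFinite _) (Set.toFinite _)).symm
        _ ≤ _ := Set.ncard_le_ncard (Set.union_subset hsub1 hsub2) (Set.toFinite _)
end

section
/- Let H1, H2 be glueable, edge-disjoint k-labeled graphs with shared vertices {v_1, …, v_q} = V(H1) ∩ V(H2) of labels i_1, …, i_q respectively, and let H = H1 ⊔ H2. Then the set of vectors witnessed in H equals the set of all vectors (s_1, …, s_k, r_1, …, r_k, ℓ) obtained as follows: take any vector (s^1_1, …, s^1_k, r^1_1, …, r^1_k, ℓ^1) witnessed in H1, any vector (s^2_1, …, s^2_k, r^2_1, …, r^2_k, ℓ^2) witnessed in H2, and any ℓ with ℓ^1 + ℓ^2 ≤ ℓ ≤ |E(H)|, and set, for every label i ∉ {i_1, …, i_q}: s_i = s^1_i + s^2_i and r_i = r^1_i + r^2_i; and for every glue label i ∈ {i_1, …, i_q} (for which all of s^1_i, s^2_i, r^1_i, r^2_i lie in {0,1}):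 s_i = max(s^1_i, s^2_i) and r_i = (1 − s^1_i)(1 − s^2_i) · max(r^1_i, r^2_i). -/
open SimpleGraph

variable {U : Type} {k : ℕ}

/-- The set of vertices incident with an edge from the edge set `S`. -/
def edgeVerts (S : Set (Sym2 U)) : Set U := {v | ∃ e ∈ S, v ∈ e}

/-- A pair `(S, R)` with `S ⊆ E(H)` and `R ⊆ V(H) \ V(S)` *witnesses* the
Edge-Dominating-Set vector `(s₁, …, s_k, r₁, …, r_k, ℓ)` in the `k`-labeled graph `H`
if `|S| ≤ ℓ ≤ |E(H)|`, exactly `s i` vertices of `U_i^H` are incident with edges of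
`S`, `|R ∩ U_i^H| = r i` for every `i`, and every edge of `H` neither belonging to `S`
nor sharing an endpoint with an edge of `S` has an endpoint in `R`. -/
def EDSWitnessed (H : Subgraph (⊤ : SimpleGraph U)) (lab : U → Fin k)
    (s r : Fin k → ℕ) (ℓ : ℕ) : Prop :=
  ∃ S : Set (Sym2 U), S ⊆ H.edgeSet ∧
    ∃ R : Set U, R ⊆ H.verts \ edgeVerts S ∧
      S.ncard ≤ ℓ ∧ ℓ ≤ H.edgeSet.ncard ∧
      (∀ i, (labelSet H lab i ∩ edgeVerts S).ncard = s i) ∧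
      (∀ i, (R ∩ labelSet H lab i).ncard = r i) ∧
      (∀ e ∈ H.edgeSet, (∀ f ∈ S, ∀ v, v ∈ f → v ∉ e) → ∃ v ∈ R, v ∈ e)

/- ### Auxiliary lemmas -/

lemma edgeVerts_union' (S1 S2 : Set (Sym2 U)) :
    edgeVerts (S1 ∪ S2) = edgeVerts S1 ∪ edgeVerts S2 := by
  ext v
  constructor
  · rintro ⟨e, he | he, hv⟩
    · exact Or.inl ⟨e, he, hv⟩
    · exact Or.inr ⟨e, he, hv⟩
  · rintro (⟨e, he, hv⟩ | ⟨e, he, hv⟩)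
    · exact ⟨e, Or.inl he, hv⟩
    · exact ⟨e, Or.inr he, hv⟩

lemma mem_verts_of_edge' {H : Subgraph (⊤ : SimpleGraph U)} {e : Sym2 U}
    (he : e ∈ H.edgeSet) {v : U} (hv : v ∈ e) : v ∈ H.verts := by
  induction e with
  | h a b =>
    rcases Sym2.mem_iff.1 hv with rfl | rfl
    · exact (Subgraph.mem_edgeSet.1 he).fst_mem
    · exact (Subgraph.mem_edgeSet.1 he).snd_mem

lemma edgeVerts_subset' {H : Subgraph (⊤ : SimpleGraph U)} {S : Set (Sym2 U)}
    (hS : S ⊆ H.edgeSet) : edgeVerts S ⊆ H.verts := by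
  rintro v ⟨e, he, hv⟩
  exact mem_verts_of_edge' (hS he) hv

open Classical in
lemma ncard_singleton_inter'' (v : U) (A : Set U) :
    (({v} : Set U) ∩ A).ncard = if v ∈ A then 1 else 0 := by
  split_ifs with h
  · rw [Set.inter_eq_left.2 (Set.singleton_subset_iff.2 h), Set.ncard_singleton]
  · rw [Set.singleton_inter_eq_empty.2 h, Set.ncard_empty]

lemma ncard_union_disj' {α : Type*} [Finite α] {A B : Set α} (h : A ∩ B = ∅) :
    (A ∪ B).ncard = A.ncard + B.ncard :=
  Set.ncard_union_eq (Set.disjoint_iff_inter_eq_empty.2 h) (Set.toFinite _) (Set.toFinite _)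

lemma nonglue_facts' {H1 H2 : Subgraph (⊤ : SimpleGraph U)} {lab1 lab2 labH : U → Fin k}
    (hglue : Glueable H1 H2 lab1 lab2)
    (hlab1 : ∀ v ∈ H1.verts, labH v = lab1 v)
    (hlab2 : ∀ v ∈ H2.verts, labH v = lab2 v)
    {i : Fin k} (hi : ¬ ∃ v ∈ H1.verts ∩ H2.verts, lab1 v = i) :
    labelSet (H1 ⊔ H2) labH i = labelSet H1 lab1 i ∪ labelSet H2 lab2 i ∧
    (∀ w ∈ labelSet H1 lab1 i, w ∉ H2.verts) ∧
    (∀ w ∈ labelSet H2 lab2 i, w ∉ H1.verts) := by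
  have h1 : ∀ w ∈ labelSet H1 lab1 i, w ∉ H2.verts := by
    rintro w ⟨hw1, hwi⟩ hw2
    exact hi ⟨w, ⟨hw1, hw2⟩, hwi⟩
  have h2 : ∀ w ∈ labelSet H2 lab2 i, w ∉ H1.verts := by
    rintro w ⟨hw2, hwi⟩ hw1
    exact hi ⟨w, ⟨hw1, hw2⟩, ((hglue w ⟨hw1, hw2⟩).1).trans hwi⟩
  refine ⟨?_, h1, h2⟩
  ext w
  constructor
  · rintro ⟨hw, hwi⟩
    rw [Subgraph.verts_sup] at hw
    rcases hw with hw1 | hw2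
    · exact Or.inl ⟨hw1, (hlab1 w hw1).symm.trans hwi⟩
    · exact Or.inr ⟨hw2, (hlab2 w hw2).symm.trans hwi⟩
  · rintro (⟨hw1, hwi⟩ | ⟨hw2, hwi⟩)
    · exact ⟨by rw [Subgraph.verts_sup]; exact Or.inl hw1, (hlab1 w hw1).trans hwi⟩
    · exact ⟨by rw [Subgraph.verts_sup]; exact Or.inr hw2, (hlab2 w hw2).trans hwi⟩

lemma glue_singletons' {H1 H2 : Subgraph (⊤ : SimpleGraph U)} {lab1 lab2 labH : U → Fin k}
    (hglue : Glueable H1 H2 lab1 lab2)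
    (hlab1 : ∀ v ∈ H1.verts, labH v = lab1 v)
    (hlab2 : ∀ v ∈ H2.verts, labH v = lab2 v)
    {v : U} (hv : v ∈ H1.verts ∩ H2.verts) {i : Fin k} (hvi : lab1 v = i) :
    labelSet H1 lab1 i = {v} ∧ labelSet H2 lab2 i = {v} ∧
      labelSet (H1 ⊔ H2) labH i = {v} := by
  obtain ⟨hl12, hu1, hu2⟩ := hglue v hv
  refine ⟨?_, ?_, ?_⟩
  · ext w
    constructor
    · rintro ⟨hw, hwi⟩
      exact hu1 w hw (hwi.trans hvi.symm)
    · rintro rfl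
      exact ⟨hv.1, hvi⟩
  · ext w
    constructor
    · rintro ⟨hw, hwi⟩
      exact hu2 w hw (hwi.trans (hvi.symm.trans hl12))
    · rintro rfl
      exact ⟨hv.2, hl12.symm.trans hvi⟩
  · ext w
    constructor
    · rintro ⟨hw, hwi⟩
      rw [Subgraph.verts_sup] at hw
      rcases hw with hw1 | hw2
      · exact hu1 w hw1 (((hlab1 w hw1).symm.trans hwi).trans hvi.symm)
      · exact hu2 w hw2 (((hlab2 w hw2).symm.trans hwi).trans (hvi.symm.trans hl12))
    · rintro rfl
      exact ⟨by rw [Subgraph.verts_sup]; exact Or.inl hv.1, (hlab1 _ hv.1).trans hvi⟩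

/-- correctness of the Edge-Dominating-Set glue procedure. -/
theorem eds_glue_tables [Fintype U]
    (H1 H2 : Subgraph (⊤ : SimpleGraph U)) (lab1 lab2 labH : U → Fin k)
    (hglue : Glueable H1 H2 lab1 lab2)
    (hedisj : H1.edgeSet ∩ H2.edgeSet = ∅)
    (hlab1 : ∀ v ∈ H1.verts, labH v = lab1 v)
    (hlab2 : ∀ v ∈ H2.verts, labH v = lab2 v)
    (s r : Fin k → ℕ) (ℓ : ℕ) :
    EDSWitnessed (H1 ⊔ H2) labH s r ℓ ↔
      ∃ (s1 r1 : Fin k → ℕ) (ℓ1 : ℕ) (s2 r2 : Fin k → ℕ) (ℓ2 : ℕ),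
        EDSWitnessed H1 lab1 s1 r1 ℓ1 ∧ EDSWitnessed H2 lab2 s2 r2 ℓ2 ∧
        ℓ1 + ℓ2 ≤ ℓ ∧ ℓ ≤ ((H1 ⊔ H2).edgeSet).ncard ∧
        (∀ i, ¬ (∃ v ∈ H1.verts ∩ H2.verts, lab1 v = i) →
          s i = s1 i + s2 i ∧ r i = r1 i + r2 i) ∧
        (∀ i, (∃ v ∈ H1.verts ∩ H2.verts, lab1 v = i) →
          s i = max (s1 i) (s2 i) ∧
          r i = (1 - s1 i) * (1 - s2 i) * max (r1 i) (r2 i)) := by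
  classical
  have hEH : (H1 ⊔ H2).edgeSet = H1.edgeSet ∪ H2.edgeSet := Subgraph.edgeSet_sup
  have hVH : (H1 ⊔ H2).verts = H1.verts ∪ H2.verts := Subgraph.verts_sup H1 H2
  constructor
  · -- Forward direction
    rintro ⟨S, hSsub, R, hRsub, hScard, hlE, hs, hr, hdom⟩
    set S1 : Set (Sym2 U) := S ∩ H1.edgeSet with hS1def
    set S2 : Set (Sym2 U) := S ∩ H2.edgeSet with hS2def
    have hS1sub : S1 ⊆ H1.edgeSet := fun e he => he.2
    have hS2sub : S2 ⊆ H2.edgeSet := fun e he => he.2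
    have hSeq : S1 ∪ S2 = S := by
      ext e
      constructor
      · rintro (⟨h, _⟩ | ⟨h, _⟩) <;> exact h
      · intro he
        have := hSsub he
        rw [hEH] at this
        rcases this with h | h
        · exact Or.inl ⟨he, h⟩
        · exact Or.inr ⟨he, h⟩
    have heV : edgeVerts S = edgeVerts S1 ∪ edgeVerts S2 := by
      rw [← hSeq, edgeVerts_union']
    have heV1 : edgeVerts S1 ⊆ H1.verts := edgeVerts_subset' hS1sub
    have heV2 : edgeVerts S2 ⊆ H2.verts := edgeVerts_subset' hS2sub
    set R1 : Set U := (R ∩ H1.verts) ∪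
      ((H1.verts ∩ H2.verts) ∩ (edgeVerts S2 \ edgeVerts S1)) with hR1def
    set R2 : Set U := (R ∩ H2.verts) ∪
      ((H1.verts ∩ H2.verts) ∩ (edgeVerts S1 \ edgeVerts S2)) with hR2def
    refine ⟨fun i => (labelSet H1 lab1 i ∩ edgeVerts S1).ncard,
            fun i => (R1 ∩ labelSet H1 lab1 i).ncard, S1.ncard,
            fun i => (labelSet H2 lab2 i ∩ edgeVerts S2).ncard,
            fun i => (R2 ∩ labelSet H2 lab2 i).ncard, S2.ncard,
            ?_, ?_, ?_, hlE, ?_, ?_⟩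
    · -- EDSWitnessed H1
      refine ⟨S1, hS1sub, R1, ?_, le_refl _,
        Set.ncard_le_ncard hS1sub (Set.toFinite _), fun i => rfl, fun i => rfl, ?_⟩
      · rintro w (⟨hwR, hw1⟩ | ⟨hwW, hw2, hnw1⟩)
        · exact ⟨hw1, fun hc => (hRsub hwR).2 (by rw [heV]; exact Or.inl hc)⟩
        · exact ⟨hwW.1, hnw1⟩
      · intro e heE hnt
        by_cases htouch : ∃ f ∈ S, ∃ w, w ∈ f ∧ w ∈ e
        · obtain ⟨f, hfS, w, hwf, hwe⟩ := htouch
          have hw1 : w ∈ H1.verts := mem_verts_of_edge' heE hwe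
          have := hSsub hfS
          rw [hEH] at this
          rcases this with hf1 | hf2
          · exact absurd hwe (hnt f ⟨hfS, hf1⟩ w hwf)
          · have hw2 : w ∈ H2.verts := mem_verts_of_edge' hf2 hwf
            have hnw1 : w ∉ edgeVerts S1 := by
              rintro ⟨f', hf', hwf'⟩
              exact hnt f' hf' w hwf' hwe
            exact ⟨w, Or.inr ⟨⟨hw1, hw2⟩, ⟨f, ⟨hfS, hf2⟩, hwf⟩, hnw1⟩, hwe⟩
        · obtain ⟨w, hwR, hwe⟩ := hdom e (by rw [hEH]; exact Or.inl heE)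
            (fun f hf v hv hv' => htouch ⟨f, hf, v, hv, hv'⟩)
          exact ⟨w, Or.inl ⟨hwR, mem_verts_of_edge' heE hwe⟩, hwe⟩
    · -- EDSWitnessed H2
      refine ⟨S2, hS2sub, R2, ?_, le_refl _,
        Set.ncard_le_ncard hS2sub (Set.toFinite _), fun i => rfl, fun i => rfl, ?_⟩
      · rintro w (⟨hwR, hw2⟩ | ⟨hwW, hw1, hnw2⟩)
        · exact ⟨hw2, fun hc => (hRsub hwR).2 (by rw [heV]; exact Or.inr hc)⟩
        · exact ⟨hwW.2, hnw2⟩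
      · intro e heE hnt
        by_cases htouch : ∃ f ∈ S, ∃ w, w ∈ f ∧ w ∈ e
        · obtain ⟨f, hfS, w, hwf, hwe⟩ := htouch
          have hw2 : w ∈ H2.verts := mem_verts_of_edge' heE hwe
          have := hSsub hfS
          rw [hEH] at this
          rcases this with hf1 | hf2
          · have hw1 : w ∈ H1.verts := mem_verts_of_edge' hf1 hwf
            have hnw2 : w ∉ edgeVerts S2 := by
              rintro ⟨f', hf', hwf'⟩
              exact hnt f' hf' w hwf' hwe
            exact ⟨w, Or.inr ⟨⟨hw1, hw2⟩, ⟨f, ⟨hfS, hf1⟩, hwf⟩, hnw2⟩, hwe⟩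
          · exact absurd hwe (hnt f ⟨hfS, hf2⟩ w hwf)
        · obtain ⟨w, hwR, hwe⟩ := hdom e (by rw [hEH]; exact Or.inr heE)
            (fun f hf v hv hv' => htouch ⟨f, hf, v, hv, hv'⟩)
          exact ⟨w, Or.inl ⟨hwR, mem_verts_of_edge' heE hwe⟩, hwe⟩
    · -- ℓ1 + ℓ2 ≤ ℓ
      have hdisjS : S1 ∩ S2 = ∅ := by
        ext e
        simp only [Set.mem_empty_iff_false, iff_false]
        rintro ⟨⟨_, h1⟩, ⟨_, h2⟩⟩
        have : e ∈ H1.edgeSet ∩ H2.edgeSet := ⟨h1, h2⟩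
        rw [hedisj] at this
        exact this
      calc S1.ncard + S2.ncard = (S1 ∪ S2).ncard := (ncard_union_disj' hdisjS).symm
        _ = S.ncard := by rw [hSeq]
        _ ≤ ℓ := hScard
    · -- non-glue labels
      intro i hi
      beta_reduce
      obtain ⟨hL, hL1', hL2'⟩ := nonglue_facts' hglue hlab1 hlab2 hi
      constructor
      · rw [← hs i]
        have key : labelSet (H1 ⊔ H2) labH i ∩ edgeVerts S =
            (labelSet H1 lab1 i ∩ edgeVerts S1) ∪ (labelSet H2 lab2 i ∩ edgeVerts S2) := by
          rw [hL, heV]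
          ext w
          constructor
          · rintro ⟨hw1 | hw2, hv1 | hv2⟩
            · exact Or.inl ⟨hw1, hv1⟩
            · exact absurd (heV2 hv2) (hL1' w hw1)
            · exact absurd (heV1 hv1) (hL2' w hw2)
            · exact Or.inr ⟨hw2, hv2⟩
          · rintro (⟨hw, hv⟩ | ⟨hw, hv⟩)
            · exact ⟨Or.inl hw, Or.inl hv⟩
            · exact ⟨Or.inr hw, Or.inr hv⟩
        rw [key]
        exact ncard_union_disj' (by
          ext w
          simp only [Set.mem_empty_iff_false, iff_false]
          rintro ⟨⟨hw1, _⟩, ⟨hw2, hv2⟩⟩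
          exact hL1' w hw1 (heV2 hv2))
      · rw [← hr i]
        have e1 : R1 ∩ labelSet H1 lab1 i = R ∩ labelSet H1 lab1 i := by
          ext w
          constructor
          · rintro ⟨⟨hwR, _⟩ | ⟨hwW, _⟩, hwL⟩
            · exact ⟨hwR, hwL⟩
            · exact absurd hwW.2 (hL1' w hwL)
          · rintro ⟨hwR, hwL⟩
            exact ⟨Or.inl ⟨hwR, hwL.1⟩, hwL⟩
        have e2 : R2 ∩ labelSet H2 lab2 i = R ∩ labelSet H2 lab2 i := by
          ext w
          constructor
          · rintro ⟨⟨hwR, _⟩ | ⟨hwW, _⟩, hwL⟩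
            · exact ⟨hwR, hwL⟩
            · exact absurd hwW.1 (hL2' w hwL)
          · rintro ⟨hwR, hwL⟩
            exact ⟨Or.inl ⟨hwR, hwL.1⟩, hwL⟩
        rw [e1, e2, hL, Set.inter_union_distrib_left]
        exact ncard_union_disj' (by
          ext w
          simp only [Set.mem_empty_iff_false, iff_false]
          rintro ⟨⟨_, hw1⟩, ⟨_, hw2⟩⟩
          exact hL1' w hw1 hw2.1)
    · -- glue labels
      intro i hi
      beta_reduce
      obtain ⟨v, hvW, hvi⟩ := hi
      obtain ⟨hL1s, hL2s, hLs⟩ := glue_singletons' hglue hlab1 hlab2 hvW hvi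
      have hsH : s i = if v ∈ edgeVerts S1 ∨ v ∈ edgeVerts S2 then 1 else 0 := by
        rw [← hs i, hLs, heV, ncard_singleton_inter'']
        simp [Set.mem_union]
      have hs1' : (labelSet H1 lab1 i ∩ edgeVerts S1).ncard =
          if v ∈ edgeVerts S1 then 1 else 0 := by
        rw [hL1s, ncard_singleton_inter'']
      have hs2' : (labelSet H2 lab2 i ∩ edgeVerts S2).ncard =
          if v ∈ edgeVerts S2 then 1 else 0 := by
        rw [hL2s, ncard_singleton_inter'']
      have hrH : r i = if v ∈ R then 1 else 0 := by
        rw [← hr i, hLs, Set.inter_comm, ncard_singleton_inter'']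
      have hvR1 : v ∈ R1 ↔ v ∈ R ∨ (v ∈ edgeVerts S2 ∧ v ∉ edgeVerts S1) := by
        constructor
        · rintro (⟨h, _⟩ | ⟨_, h2, h1⟩)
          · exact Or.inl h
          · exact Or.inr ⟨h2, h1⟩
        · rintro (h | ⟨h2, h1⟩)
          · exact Or.inl ⟨h, hvW.1⟩
          · exact Or.inr ⟨hvW, h2, h1⟩
      have hvR2 : v ∈ R2 ↔ v ∈ R ∨ (v ∈ edgeVerts S1 ∧ v ∉ edgeVerts S2) := by
        constructor
        · rintro (⟨h, _⟩ | ⟨_, h1, h2⟩)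
          · exact Or.inl h
          · exact Or.inr ⟨h1, h2⟩
        · rintro (h | ⟨h1, h2⟩)
          · exact Or.inl ⟨h, hvW.2⟩
          · exact Or.inr ⟨hvW, h1, h2⟩
      have hr1' : (R1 ∩ labelSet H1 lab1 i).ncard =
          if v ∈ R ∨ (v ∈ edgeVerts S2 ∧ v ∉ edgeVerts S1) then 1 else 0 := by
        rw [hL1s, Set.inter_comm, ncard_singleton_inter'']
        simp only [hvR1]
      have hr2' : (R2 ∩ labelSet H2 lab2 i).ncard =
          if v ∈ R ∨ (v ∈ edgeVerts S1 ∧ v ∉ edgeVerts S2) then 1 else 0 := by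
        rw [hL2s, Set.inter_comm, ncard_singleton_inter'']
        simp only [hvR2]
      have hvnot : v ∈ R → v ∉ edgeVerts S1 ∧ v ∉ edgeVerts S2 := by
        intro h
        have := (hRsub h).2
        rw [heV] at this
        exact ⟨fun h1 => this (Or.inl h1), fun h2 => this (Or.inr h2)⟩
      constructor
      · simp only [hsH, hs1', hs2']
        by_cases h1 : v ∈ edgeVerts S1 <;> by_cases h2 : v ∈ edgeVerts S2 <;>
          simp [h1, h2]
      · simp only [hrH, hs1', hs2', hr1', hr2']
        by_cases h1 : v ∈ edgeVerts S1 <;> by_cases h2 : v ∈ edgeVerts S2 <;>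
          by_cases h3 : v ∈ R
        · exact absurd h1 (hvnot h3).1
        · simp [h1, h2, h3]
        · exact absurd h1 (hvnot h3).1
        · simp [h1, h2, h3]
        · exact absurd h2 (hvnot h3).2
        · simp [h1, h2, h3]
        · simp [h1, h2, h3]
        · simp [h1, h2, h3]
  · -- Backward direction
    rintro ⟨s1, r1, ℓ1, s2, r2, ℓ2,
      ⟨S1, hS1sub, R1, hR1sub, hS1c, hl1, hs1, hr1, hdom1⟩,
      ⟨S2, hS2sub, R2, hR2sub, hS2c, hl2, hs2, hr2, hdom2⟩, hll, hlE, hng, hg⟩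
    set S : Set (Sym2 U) := S1 ∪ S2 with hSdef
    set R : Set U := (R1 ∪ R2) \ edgeVerts S with hRdef
    have heV : edgeVerts S = edgeVerts S1 ∪ edgeVerts S2 := edgeVerts_union' _ _
    have heV1 : edgeVerts S1 ⊆ H1.verts := edgeVerts_subset' hS1sub
    have heV2 : edgeVerts S2 ⊆ H2.verts := edgeVerts_subset' hS2sub
    refine ⟨S, ?_, R, ?_, ?_, hlE, ?_, ?_, ?_⟩
    · rintro e (h | h)
      · rw [hEH]; exact Or.inl (hS1sub h)
      · rw [hEH]; exact Or.inr (hS2sub h)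
    · rintro w ⟨hw, hne⟩
      refine ⟨?_, hne⟩
      rw [hVH]
      rcases hw with hw | hw
      · exact Or.inl (hR1sub hw).1
      · exact Or.inr (hR2sub hw).1
    · have hdisjS : S1 ∩ S2 = ∅ := by
        ext e
        simp only [Set.mem_empty_iff_false, iff_false]
        rintro ⟨h1, h2⟩
        have : e ∈ H1.edgeSet ∩ H2.edgeSet := ⟨hS1sub h1, hS2sub h2⟩
        rw [hedisj] at this
        exact this
      calc S.ncard = S1.ncard + S2.ncard := ncard_union_disj' hdisjS
        _ ≤ ℓ1 + ℓ2 := Nat.add_le_add hS1c hS2c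
        _ ≤ ℓ := hll
    · -- s counts
      intro i
      by_cases hi : ∃ v ∈ H1.verts ∩ H2.verts, lab1 v = i
      · obtain ⟨v, hvW, hvi⟩ := hi
        obtain ⟨hL1s, hL2s, hLs⟩ := glue_singletons' hglue hlab1 hlab2 hvW hvi
        rw [(hg i ⟨v, hvW, hvi⟩).1, ← hs1 i, ← hs2 i, hLs, hL1s, hL2s, heV,
          ncard_singleton_inter'', ncard_singleton_inter'', ncard_singleton_inter'']
        by_cases h1 : v ∈ edgeVerts S1 <;> by_cases h2 : v ∈ edgeVerts S2 <;>
          simp [h1, h2]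
      · obtain ⟨hL, hL1', hL2'⟩ := nonglue_facts' hglue hlab1 hlab2 hi
        rw [(hng i hi).1, ← hs1 i, ← hs2 i]
        have key : labelSet (H1 ⊔ H2) labH i ∩ edgeVerts S =
            (labelSet H1 lab1 i ∩ edgeVerts S1) ∪ (labelSet H2 lab2 i ∩ edgeVerts S2) := by
          rw [hL, heV]
          ext w
          constructor
          · rintro ⟨hw1 | hw2, hv1 | hv2⟩
            · exact Or.inl ⟨hw1, hv1⟩
            · exact absurd (heV2 hv2) (hL1' w hw1)
            · exact absurd (heV1 hv1) (hL2' w hw2)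
            · exact Or.inr ⟨hw2, hv2⟩
          · rintro (⟨hw, hv⟩ | ⟨hw, hv⟩)
            · exact ⟨Or.inl hw, Or.inl hv⟩
            · exact ⟨Or.inr hw, Or.inr hv⟩
        rw [key]
        exact ncard_union_disj' (by
          ext w
          simp only [Set.mem_empty_iff_false, iff_false]
          rintro ⟨⟨hw1, _⟩, ⟨hw2, hv2⟩⟩
          exact hL1' w hw1 (heV2 hv2))
    · -- r counts
      intro i
      by_cases hi : ∃ v ∈ H1.verts ∩ H2.verts, lab1 v = i
      · obtain ⟨v, hvW, hvi⟩ := hi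
        obtain ⟨hL1s, hL2s, hLs⟩ := glue_singletons' hglue hlab1 hlab2 hvW hvi
        have hvR : v ∈ R ↔ (v ∈ R1 ∨ v ∈ R2) ∧ ¬(v ∈ edgeVerts S1 ∨ v ∈ edgeVerts S2) := by
          rw [hRdef, Set.mem_diff, heV]
          rfl
        rw [(hg i ⟨v, hvW, hvi⟩).2, ← hs1 i, ← hs2 i, ← hr1 i, ← hr2 i,
          hLs, hL1s, hL2s, Set.inter_comm R, Set.inter_comm R1, Set.inter_comm R2,
          ncard_singleton_inter'', ncard_singleton_inter'', ncard_singleton_inter'',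
          ncard_singleton_inter'', ncard_singleton_inter'']
        simp only [hvR]
        by_cases h1 : v ∈ edgeVerts S1 <;> by_cases h2 : v ∈ edgeVerts S2 <;>
          by_cases h3 : v ∈ R1 <;> by_cases h4 : v ∈ R2 <;>
          simp [h1, h2, h3, h4]
      · obtain ⟨hL, hL1', hL2'⟩ := nonglue_facts' hglue hlab1 hlab2 hi
        rw [(hng i hi).2, ← hr1 i, ← hr2 i]
        have e1 : R ∩ labelSet H1 lab1 i = R1 ∩ labelSet H1 lab1 i := by
          ext w
          constructor
          · rintro ⟨⟨hw | hw, _⟩, hwL⟩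
            · exact ⟨hw, hwL⟩
            · exact absurd (hR2sub hw).1 (hL1' w hwL)
          · rintro ⟨hwR1, hwL⟩
            refine ⟨⟨Or.inl hwR1, ?_⟩, hwL⟩
            rw [heV]
            rintro (h | h)
            · exact (hR1sub hwR1).2 h
            · exact hL1' w hwL (heV2 h)
        have e2 : R ∩ labelSet H2 lab2 i = R2 ∩ labelSet H2 lab2 i := by
          ext w
          constructor
          · rintro ⟨⟨hw | hw, _⟩, hwL⟩
            · exact absurd (hR1sub hw).1 (hL2' w hwL)
            · exact ⟨hw, hwL⟩
          · rintro ⟨hwR2, hwL⟩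
            refine ⟨⟨Or.inr hwR2, ?_⟩, hwL⟩
            rw [heV]
            rintro (h | h)
            · exact hL2' w hwL (heV1 h)
            · exact (hR2sub hwR2).2 h
        rw [hL, Set.inter_union_distrib_left, e1, e2]
        exact ncard_union_disj' (by
          ext w
          simp only [Set.mem_empty_iff_false, iff_false]
          rintro ⟨⟨_, hw1⟩, ⟨_, hw2⟩⟩
          exact hL1' w hw1 hw2.1)
    · -- domination
      intro e heE hnt
      rw [hEH] at heE
      rcases heE with he1 | he2
      · obtain ⟨w, hwR1, hwe⟩ := hdom1 e he1 (fun f hf => hnt f (Or.inl hf))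
        refine ⟨w, ⟨Or.inl hwR1, ?_⟩, hwe⟩
        rw [heV]
        rintro (h | h)
        · exact (hR1sub hwR1).2 h
        · obtain ⟨f, hf, hwf⟩ := h
          exact hnt f (Or.inr hf) w hwf hwe
      · obtain ⟨w, hwR2, hwe⟩ := hdom2 e he2 (fun f hf => hnt f (Or.inr hf))
        refine ⟨w, ⟨Or.inr hwR2, ?_⟩, hwe⟩
        rw [heV]
        rintro (h | h)
        · obtain ⟨f, hf, hwf⟩ := h
          exact hnt f (Or.inl hf) w hwf hwe
        · exact (hR2sub hwR2).2 h
end
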